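/- arXiv:1611.00963 — 8 statements merged into one kernel-verified Lean document; each statement's English description precedes it below -/
import Mathlib

section
/- Let w = (w₁, …, w_n) be a weight vector with w₁ ≥ w₂ ≥ … ≥ w_n > 0 and let 1 ≤ k ≤ n. The dual norm of the weighted vector k-norm ‖x‖_{(k)}^w = Σ_{i=1}^k w_i |x|_i^↓ is given by ‖x‖_{(k)*}^w = max{ ‖x‖_{(1)}/w₁, ‖x‖_{(2)}/(w₁+w₂), …, ‖x‖_{(k−1)}/(w₁+⋯+w_{k−1}), ‖x‖_{(n)}/(w₁+⋯+w_k) }, where ‖x‖_{(j)} = Σ_{i=1}^j |x|_i^↓ is the (unweighted) vector j-norm. -/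
open Finset

/-- `dsort x i` is the `i`-th entry of the non-increasing rearrangement of `|x|`. -/
noncomputable def dsort {n : ℕ} (x : Fin n → ℝ) : Fin n → ℝ :=
  fun i => |x (Tuple.sort (fun j => |x j|) i.rev)|

/-- The weighted vector `k`-norm `‖x‖_{(k)}^w = Σ_{i<k} w_i |x|_i^↓`. -/
noncomputable def kNormW {n : ℕ} (w : Fin n → ℝ) (k : ℕ) (x : Fin n → ℝ) : ℝ :=
  ∑ i : Fin n, if (i : ℕ) < k then w i * dsort x i else 0

/-- The (unweighted) vector `j`-norm `‖x‖_{(j)} = Σ_{i<j} |x|_i^↓`. -/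
noncomputable def kNormU {n : ℕ} (j : ℕ) (x : Fin n → ℝ) : ℝ :=
  ∑ i : Fin n, if (i : ℕ) < j then dsort x i else 0

/-- The dual norm of a norm `N` on `ℝⁿ`. -/
noncomputable def dualNorm {n : ℕ} (N : (Fin n → ℝ) → ℝ) (x : Fin n → ℝ) : ℝ :=
  sSup {r | ∃ y : Fin n → ℝ, N y ≤ 1 ∧ r = ∑ i, x i * y i}

namespace DualAux

variable {n : ℕ}

/-- The permutation so that `dsort x = |x| ∘ dperm x`. -/
noncomputable def dperm (x : Fin n → ℝ) : Equiv.Perm (Fin n) :=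
  Fin.revPerm.trans (Tuple.sort fun j => |x j|)

lemma dsort_apply (x : Fin n → ℝ) (i : Fin n) : dsort x i = |x (dperm x i)| := rfl

lemma dsort_nonneg (x : Fin n → ℝ) (i : Fin n) : 0 ≤ dsort x i := abs_nonneg _

lemma dsort_antitone (x : Fin n → ℝ) : Antitone (dsort x) := by
  intro i j hij
  exact Tuple.monotone_sort (fun j => |x j|) (Fin.rev_le_rev.mpr hij)

lemma dsort_eq_of_antitone (y e : Fin n → ℝ) (he : Antitone e) (π : Equiv.Perm (Fin n))
    (h : ∀ i, |y i| = e (π i)) : dsort y = e := by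
  set g : Fin n → ℝ := fun i => e (Fin.revPerm i) with hg
  have hgm : Monotone g := fun i j hij => he (Fin.rev_le_rev.mpr hij)
  have hf : (fun i => |y i|) = g ∘ (π.trans Fin.revPerm) := by
    funext i
    simp [h i, hg]
  have hsg : g ∘ (Tuple.sort g) = g := by
    rw [Tuple.sort_eq_refl_iff_monotone.mpr hgm]
    rfl
  have key : (fun i => |y i|) ∘ (Tuple.sort fun i => |y i|) = g := by
    rw [hf, Tuple.comp_perm_comp_sort_eq_comp_sort, hsg]
  funext i
  have : dsort y i = ((fun i => |y i|) ∘ (Tuple.sort fun i => |y i|)) i.rev := rfl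
  rw [this, key]
  simp [hg]

end DualAux

namespace DualAux

/-- Extension of a `Fin n` tuple to `ℕ` by zero. -/
noncomputable def ext {n : ℕ} (u : Fin n → ℝ) : ℕ → ℝ :=
  fun m => if h : m < n then u ⟨m, h⟩ else 0

lemma ext_coe {n : ℕ} (u : Fin n → ℝ) (i : Fin n) : ext u (i : ℕ) = u i := by
  simp [ext, i.isLt]

lemma sum_univ_eq (u : Fin n → ℝ) : ∑ i : Fin n, u i = ∑ m ∈ range n, ext u m := by
  rw [Finset.sum_range fun m => ext u m]
  exact Finset.sum_congr rfl fun i _ => (ext_coe u i).symm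

lemma sum_if_lt (u : Fin n → ℝ) {j : ℕ} (hj : j ≤ n) :
    (∑ i : Fin n, if (i : ℕ) < j then u i else 0) = ∑ m ∈ range j, ext u m := by
  have h1 : (∑ i : Fin n, if (i : ℕ) < j then u i else 0)
      = ∑ m ∈ range n, (if m < j then ext u m else 0) := by
    rw [sum_univ_eq (fun i => if (i : ℕ) < j then u i else 0)]
    refine Finset.sum_congr rfl fun m hm => ?_
    have hmn : m < n := Finset.mem_range.mp hm
    simp [ext, hmn]
  rw [h1, ← Finset.sum_subset (Finset.range_subset_range.mpr hj)
    (fun m _ hm => if_neg (by simpa using hm))]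
  exact Finset.sum_congr rfl fun m hm => if_pos (Finset.mem_range.mp hm)

lemma abel_sum (F e : ℕ → ℝ) (N : ℕ) (hF : F 0 = 0) (he : e N = 0) :
    ∑ m ∈ range N, (F (m + 1) - F m) * e m = ∑ m ∈ range N, F (m + 1) * (e m - e (m + 1)) := by
  have h : ∑ m ∈ range N, F m * e m = ∑ m ∈ range N, F (m + 1) * e (m + 1) := by
    have h1 := Finset.sum_range_succ' (fun m => F m * e m) N
    have h2 := Finset.sum_range_succ (fun m => F m * e m) N
    rw [h2] at h1
    simp only [hF, he, zero_mul, mul_zero, add_zero] at h1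
    exact h1
  simp only [sub_mul, mul_sub, Finset.sum_sub_distrib]
  rw [h]

end DualAux

namespace DualAux

lemma upper_bound {n : ℕ} (w : Fin n → ℝ) (hw_pos : ∀ i, 0 < w i)
    (k : ℕ) (hk1 : 1 ≤ k) (hkn : k ≤ n) (x : Fin n → ℝ) (M : ℝ) (hM0 : 0 ≤ M)
    (hMj : ∀ j, 1 ≤ j → j ≤ k - 1 → kNormU j x ≤ M * ∑ m ∈ range j, ext w m)
    (hMn : kNormU n x ≤ M * ∑ m ∈ range k, ext w m)
    (y : Fin n → ℝ) (hy : kNormW w k y ≤ 1) :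
    ∑ i, x i * y i ≤ M := by
  set d : ℕ → ℝ := ext (dsort x) with hd
  set e : ℕ → ℝ := ext (dsort y) with he
  set ω : ℕ → ℝ := ext w with hω
  set U : ℕ → ℝ := fun j => ∑ m ∈ range j, d m with hU
  set V : ℕ → ℝ := fun j => ∑ m ∈ range j, (if m < k then ω m else 0) with hV
  have hd0 : ∀ m, 0 ≤ d m := by
    intro m; rw [hd]; unfold ext; split
    · exact dsort_nonneg _ _
    · exact le_refl 0
  have he0 : ∀ m, 0 ≤ e m := by
    intro m; rw [he]; unfold ext; split
    · exact dsort_nonneg _ _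
    · exact le_refl 0
  have he_n : e n = 0 := by rw [he]; unfold ext; exact dif_neg (lt_irrefl n)
  have he_step : ∀ m, e (m + 1) ≤ e m := by
    intro m
    by_cases h : m + 1 < n
    · have hm : m < n := Nat.lt_of_succ_lt h
      have : e (m + 1) = dsort y ⟨m + 1, h⟩ := by rw [he]; unfold ext; rw [dif_pos h]
      rw [this]
      have : e m = dsort y ⟨m, hm⟩ := by rw [he]; unfold ext; rw [dif_pos hm]
      rw [this]
      exact dsort_antitone y (by simp [Fin.mk_le_mk])
    · have : e (m + 1) = 0 := by rw [he]; unfold ext; exact dif_neg h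
      rw [this]; exact he0 m
  -- step 1-3: rearrangement
  have step1 : ∑ i, x i * y i ≤ ∑ i, |x i| * |y i| :=
    Finset.sum_le_sum fun i _ => by rw [← abs_mul]; exact le_abs_self _
  have step2 : ∑ i, |x i| * |y i| = ∑ i, dsort x i * |y (dperm x i)| := by
    rw [← Equiv.sum_comp (dperm x) (fun i => |x i| * |y i|)]
    simp only [dsort_apply]
  have hmono : Monovary (dsort x) (dsort y) := by
    intro i j h
    rcases le_total j i with hji | hij
    · exact dsort_antitone x hji
    · exact absurd (dsort_antitone y hij) (not_le.mpr h)
  have step3 : ∑ i, dsort x i * |y (dperm x i)| ≤ ∑ i, dsort x i * dsort y i := by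
    have h := hmono.sum_mul_comp_perm_le_sum_mul (σ := (dperm x).trans (dperm y).symm)
    simpa [dsort_apply, Equiv.trans_apply, Equiv.apply_symm_apply] using h
  have step4 : ∑ i, dsort x i * dsort y i = ∑ m ∈ range n, d m * e m := by
    rw [sum_univ_eq (fun i => dsort x i * dsort y i)]
    refine Finset.sum_congr rfl fun m hm => ?_
    have hmn : m < n := Finset.mem_range.mp hm
    rw [hd, he]; unfold ext; rw [dif_pos hmn, dif_pos hmn, dif_pos hmn]
  have step5 : ∑ m ∈ range n, d m * e m = ∑ m ∈ range n, U (m + 1) * (e m - e (m + 1)) := by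
    rw [← abel_sum U e n (by simp [hU]) he_n]
    refine Finset.sum_congr rfl fun m _ => ?_
    simp [hU, Finset.sum_range_succ]
  have hUV : ∀ m < n, U (m + 1) ≤ M * V (m + 1) := by
    intro m hm
    rcases le_or_gt (m + 1) (k - 1) with hcase | hcase
    · have hjn : m + 1 ≤ n := hm
      have h1 : kNormU (m + 1) x = U (m + 1) := sum_if_lt (dsort x) hjn
      have h2 : V (m + 1) = ∑ m' ∈ range (m + 1), ω m' := by
        refine Finset.sum_congr rfl fun m' hm' => ?_
        have : m' < k := by
          have := Finset.mem_range.mp hm'; omega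
        rw [if_pos this]
      rw [← h1, h2]
      exact hMj (m + 1) (Nat.le_add_left 1 m) hcase
    · have hkj : k ≤ m + 1 := by omega
      have h1 : U (m + 1) ≤ U n := by
        refine Finset.sum_le_sum_of_subset_of_nonneg (Finset.range_subset_range.mpr hm)
          fun m' _ _ => hd0 m'
      have h2 : U n = kNormU n x := (sum_if_lt (dsort x) le_rfl).symm
      have h3 : V (m + 1) = ∑ m' ∈ range k, ω m' := by
        show (∑ m' ∈ range (m + 1), if m' < k then ω m' else 0) = _
        rw [← Finset.sum_subset (Finset.range_subset_range.mpr hkj)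
          (fun m' _ hm' => if_neg fun h => hm' (Finset.mem_range.mpr h))]
        exact Finset.sum_congr rfl fun m' hm' => if_pos (Finset.mem_range.mp hm')
      rw [h3]
      exact le_trans h1 (h2 ▸ hMn)
  have step6 : ∑ m ∈ range n, U (m + 1) * (e m - e (m + 1))
      ≤ M * ∑ m ∈ range n, V (m + 1) * (e m - e (m + 1)) := by
    rw [Finset.mul_sum]
    refine Finset.sum_le_sum fun m hm => ?_
    rw [← mul_assoc]
    exact mul_le_mul_of_nonneg_right (hUV m (Finset.mem_range.mp hm))
      (sub_nonneg.mpr (he_step m))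
  have step7 : ∑ m ∈ range n, V (m + 1) * (e m - e (m + 1)) = kNormW w k y := by
    rw [← abel_sum V e n (by simp [hV]) he_n]
    have h1 : ∀ m, V (m + 1) - V m = if m < k then ω m else 0 := by
      intro m; simp [hV, Finset.sum_range_succ]
    have h2 : kNormW w k y = ∑ m ∈ range k, ext (fun i => w i * dsort y i) m :=
      sum_if_lt (fun i => w i * dsort y i) hkn
    rw [h2]
    have h3 : ∑ m ∈ range n, (V (m + 1) - V m) * e m
        = ∑ m ∈ range n, (if m < k then ω m * e m else 0) := by
      refine Finset.sum_congr rfl fun m _ => ?_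
      rw [h1]; split <;> simp
    rw [h3, ← Finset.sum_subset (Finset.range_subset_range.mpr hkn)
      (fun m' _ hm' => if_neg fun h => hm' (Finset.mem_range.mpr h))]
    refine Finset.sum_congr rfl fun m hm => ?_
    have hmk : m < k := Finset.mem_range.mp hm
    have hmn : m < n := lt_of_lt_of_le hmk hkn
    rw [if_pos hmk, hω, he]; unfold ext
    rw [dif_pos hmn, dif_pos hmn, dif_pos hmn]
  calc ∑ i, x i * y i ≤ ∑ i, |x i| * |y i| := step1
    _ = ∑ i, dsort x i * |y (dperm x i)| := step2
    _ ≤ ∑ i, dsort x i * dsort y i := step3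
    _ = ∑ m ∈ range n, d m * e m := step4
    _ = ∑ m ∈ range n, U (m + 1) * (e m - e (m + 1)) := step5
    _ ≤ M * ∑ m ∈ range n, V (m + 1) * (e m - e (m + 1)) := step6
    _ = M * kNormW w k y := by rw [step7]
    _ ≤ M * 1 := mul_le_mul_of_nonneg_left hy hM0
    _ = M := mul_one M

end DualAux

namespace DualAux

lemma witness {n : ℕ} (w : Fin n → ℝ) (k : ℕ) (x : Fin n → ℝ)
    (j : ℕ) (c : ℝ) (hc : 0 < c) :
    ∃ y : Fin n → ℝ,
      kNormW w k y = (∑ i : Fin n, if (i : ℕ) < min j k then w i else 0) * c ∧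
      ∑ i, x i * y i = kNormU j x * c := by
  set p := dperm x with hp
  set y : Fin n → ℝ :=
    fun i => if ((p.symm i : Fin n) : ℕ) < j then (if x i < 0 then -1 else 1) * c else 0 with hy
  have he₀ : Antitone (fun m : Fin n => if (m : ℕ) < j then c else 0) := by
    intro a b hab
    have habn : (a : ℕ) ≤ (b : ℕ) := hab
    dsimp only
    split_ifs with h1 h2
    · exact le_refl c
    · exact absurd h1 (by omega)
    · exact hc.le
    · exact le_refl 0
  have habs : ∀ i, |y i| = (fun m : Fin n => if (m : ℕ) < j then c else 0) (p.symm i) := by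
    intro i
    rw [hy]
    dsimp only
    split_ifs with h hx
    · rw [abs_mul, abs_of_neg (by norm_num : (-1:ℝ) < 0), abs_of_pos hc]; norm_num
    · rw [abs_mul, abs_one, abs_of_pos hc, one_mul]
    · exact abs_zero
  have hds : dsort y = fun m : Fin n => if (m : ℕ) < j then c else 0 :=
    dsort_eq_of_antitone y _ he₀ p.symm habs
  refine ⟨y, ?_, ?_⟩
  · unfold kNormW
    rw [hds, Finset.sum_mul]
    refine Finset.sum_congr rfl fun i _ => ?_
    beta_reduce
    by_cases h1 : (i : ℕ) < k
    · by_cases h2 : (i : ℕ) < j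
      · rw [if_pos h1, if_pos h2, if_pos (lt_min h2 h1)]
      · rw [if_pos h1, if_neg h2, if_neg (by omega : ¬ (i : ℕ) < min j k), mul_zero, zero_mul]
    · rw [if_neg h1, if_neg (by omega : ¬ (i : ℕ) < min j k), zero_mul]
  · rw [← Equiv.sum_comp p (fun i => x i * y i)]
    unfold kNormU
    rw [Finset.sum_mul]
    refine Finset.sum_congr rfl fun m _ => ?_
    rw [hy]
    dsimp only
    rw [Equiv.symm_apply_apply]
    by_cases h : (m : ℕ) < j
    · rw [if_pos h, if_pos h, dsort_apply, ← hp]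
      rcases lt_or_ge (x (p m)) 0 with hx | hx
      · rw [if_pos hx, abs_of_neg hx]; ring
      · rw [if_neg (not_lt.mpr hx), abs_of_nonneg hx]; ring
    · rw [if_neg h, if_neg h, mul_zero, zero_mul]

end DualAux


open DualAux

/-- Lemma 1: the dual norm of the weighted vector `k`-norm. -/
theorem dual_of_weighted_k_norm {n : ℕ} (w : Fin n → ℝ)
    (hw_mono : ∀ i j : Fin n, i ≤ j → w j ≤ w i) (hw_pos : ∀ i, 0 < w i)
    (k : ℕ) (hk1 : 1 ≤ k) (hkn : k ≤ n) (x : Fin n → ℝ) :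
    dualNorm (kNormW w k) x =
      sSup (((fun j => kNormU j x / ∑ i : Fin n, if (i : ℕ) < j then w i else 0) ''
              Set.Icc 1 (k - 1)) ∪
            {kNormU n x / ∑ i : Fin n, if (i : ℕ) < k then w i else 0}) := by
  classical
  have hn : 1 ≤ n := le_trans hk1 hkn
  have hWpos : ∀ j : ℕ, 1 ≤ j → 0 < ∑ i : Fin n, if (i : ℕ) < j then w i else 0 := by
    intro j hj
    refine Finset.sum_pos' (fun i _ => ?_) ⟨⟨0, by omega⟩, Finset.mem_univ _, ?_⟩
    · split
      · exact (hw_pos i).le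
      · exact le_refl 0
    · rw [if_pos (by simp only [Fin.val_mk]; omega)]
      exact hw_pos _
  set S := (((fun j => kNormU j x / ∑ i : Fin n, if (i : ℕ) < j then w i else 0) ''
              Set.Icc 1 (k - 1)) ∪
            {kNormU n x / ∑ i : Fin n, if (i : ℕ) < k then w i else 0}) with hS
  have hfin : S.Finite := ((Set.finite_Icc 1 (k - 1)).image _).union (Set.finite_singleton _)
  have hSbdd : BddAbove S := hfin.bddAbove
  have hU0 : ∀ j, 0 ≤ kNormU j x := by
    intro j
    refine Finset.sum_nonneg fun i _ => ?_
    split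
    · exact dsort_nonneg x i
    · exact le_refl 0
  have hlast_mem : kNormU n x / (∑ i : Fin n, if (i : ℕ) < k then w i else 0) ∈ S :=
    Set.mem_union_right _ rfl
  have hSne : S.Nonempty := ⟨_, hlast_mem⟩
  have hlastM : kNormU n x / (∑ i : Fin n, if (i : ℕ) < k then w i else 0) ≤ sSup S :=
    le_csSup hSbdd hlast_mem
  have hM0 : 0 ≤ sSup S :=
    le_trans (div_nonneg (hU0 n) (hWpos k hk1).le) hlastM
  have hMn : kNormU n x ≤ sSup S * ∑ m ∈ range k, ext w m := by
    rw [← sum_if_lt w hkn]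
    exact (div_le_iff₀ (hWpos k hk1)).mp hlastM
  have hMj : ∀ j, 1 ≤ j → j ≤ k - 1 → kNormU j x ≤ sSup S * ∑ m ∈ range j, ext w m := by
    intro j h1 h2
    have hjn : j ≤ n := by omega
    have hmem : kNormU j x / (∑ i : Fin n, if (i : ℕ) < j then w i else 0) ∈ S :=
      Set.mem_union_left _ ⟨j, Set.mem_Icc.mpr ⟨h1, h2⟩, rfl⟩
    rw [← sum_if_lt w hjn]
    exact (div_le_iff₀ (hWpos j h1)).mp (le_csSup hSbdd hmem)
  have hub : ∀ r ∈ {r | ∃ y : Fin n → ℝ, kNormW w k y ≤ 1 ∧ r = ∑ i, x i * y i}, r ≤ sSup S := by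
    rintro r ⟨y, hy1, rfl⟩
    exact upper_bound w hw_pos k hk1 hkn x (sSup S) hM0 hMj hMn y hy1
  have hTne : {r | ∃ y : Fin n → ℝ, kNormW w k y ≤ 1 ∧ r = ∑ i, x i * y i}.Nonempty := by
    refine ⟨0, 0, ?_, by simp⟩
    have h0 : kNormW w k (0 : Fin n → ℝ) = 0 := by
      unfold kNormW
      refine Finset.sum_eq_zero fun i _ => ?_
      have hd0 : dsort (0 : Fin n → ℝ) i = 0 := by simp [dsort]
      rw [hd0]
      split <;> simp
    rw [h0]; norm_num
  have hST : S ⊆ {r | ∃ y : Fin n → ℝ, kNormW w k y ≤ 1 ∧ r = ∑ i, x i * y i} := by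
    rintro r (⟨j, hj, rfl⟩ | hr)
    · obtain ⟨h1, h2⟩ := Set.mem_Icc.mp hj
      obtain ⟨y, hy1, hy2⟩ := witness w k x j (∑ i : Fin n, if (i : ℕ) < j then w i else 0)⁻¹
        (inv_pos.mpr (hWpos j h1))
      have hmin : min j k = j := Nat.min_eq_left (by omega)
      rw [hmin] at hy1
      refine ⟨y, ?_, ?_⟩
      · rw [hy1, mul_inv_cancel₀ (hWpos j h1).ne']
      · rw [hy2]; beta_reduce; rw [div_eq_mul_inv]
    · obtain ⟨y, hy1, hy2⟩ := witness w k x n (∑ i : Fin n, if (i : ℕ) < k then w i else 0)⁻¹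
        (inv_pos.mpr (hWpos k hk1))
      have hmin : min n k = k := Nat.min_eq_right hkn
      rw [hmin] at hy1
      refine ⟨y, ?_, ?_⟩
      · rw [hy1, mul_inv_cancel₀ (hWpos k hk1).ne']
      · rw [Set.mem_singleton_iff.mp hr, hy2, div_eq_mul_inv]
  unfold dualNorm
  exact le_antisymm (csSup_le hTne hub) (csSup_le_csSup ⟨sSup S, hub⟩ hSne hST)
end

section
/- Let w be a weight vector (w₁ ≥ … ≥ w_n > 0) and 1 ≤ k ≤ n. Every extreme point of the unit ball B = {x ∈ ℝⁿ : ‖x‖_{(k)}^w ≤ 1} of the weighted vector k-norm is of the form Σ_{i∈S} (±e_i)/(w₁+⋯+w_{min(k,|S|)}) for some subset S ⊆ {1,…,n} with 1 ≤ |S| ≤ k−1 or |S| = n. -/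
open Finset Filter Topology

section ExtremePoints

variable {E : Type*} [AddCommGroup E] [Module ℝ E] {A : Set E} {x d : E}

lemma eq_zero_of_add_mem_of_sub_mem (hx : x ∈ A.extremePoints ℝ) (h₁ : x + d ∈ A)
    (h₂ : x - d ∈ A) : d = 0 := by
  simpa using hx.2 h₁ h₂ (mem_openSegment_add_sub x d)

lemma eq_zero_of_eventually_add_smul_mem (hx : x ∈ A.extremePoints ℝ)
    (h : ∀ᶠ s in 𝓝 (0 : ℝ), x + s • d ∈ A) : d = 0 := by
  obtain ⟨ε, hε, hball⟩ := Metric.eventually_nhds_iff.1 h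
  have hmem : ∀ t, |t| < ε → x + t • d ∈ A := fun t ht => hball (by simpa using ht)
  have hsub : x - (ε / 2) • d ∈ A := by
    simpa [sub_eq_add_neg] using
      hmem (-(ε / 2)) (by rw [abs_neg, abs_of_pos (by positivity)]; linarith)
  have hadd := hmem (ε / 2) (by rw [abs_of_pos (by positivity)]; linarith)
  exact (smul_eq_zero.1 (eq_zero_of_add_mem_of_sub_mem hx hadd hsub)).resolve_left (by positivity)

end ExtremePoints

variable {n : ℕ}

section Dsort

lemma dsort_antitone (x : Fin n → ℝ) : Antitone (dsort x) := fun _ _ hij => by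
  simpa [dsort] using Tuple.monotone_sort (fun j => |x j|) (Fin.rev_le_rev.mpr hij)

lemma dsort_nonneg (x : Fin n → ℝ) (i : Fin n) : 0 ≤ dsort x i := abs_nonneg _

lemma exists_perm_dsort_eq (x : Fin n → ℝ) :
    ∃ σ : Equiv.Perm (Fin n), ∀ i, dsort x i = |x (σ i)| :=
  ⟨Fin.revPerm.trans (Tuple.sort fun j => |x j|), fun _ => rfl⟩

lemma dsort_eq_of_antitone {x : Fin n → ℝ} {σ : Equiv.Perm (Fin n)}
    (h : Antitone fun i => |x (σ i)|) (i : Fin n) : dsort x i = |x (σ i)| := by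
  have := Tuple.unique_monotone (f := fun j => |x j|) (σ := Fin.revPerm.trans σ)
    (fun _ _ hab => h (Fin.rev_le_rev.mpr hab)) (Tuple.monotone_sort _)
  simpa [dsort] using (congrFun this i.rev).symm

lemma abs_le_dsort_zero (x : Fin n → ℝ) (hn : 0 < n) (j : Fin n) :
    |x j| ≤ dsort x ⟨0, hn⟩ := by
  obtain ⟨σ, hσ⟩ := exists_perm_dsort_eq x
  have := dsort_antitone x (show (⟨0, hn⟩ : Fin n) ≤ σ.symm j from Nat.zero_le _)
  rwa [hσ (σ.symm j), σ.apply_symm_apply] at this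

lemma dsort_eq_comp_of_monotoneOn {x y : Fin n → ℝ} {φ : ℝ → ℝ}
    (hφ : MonotoneOn φ (Set.range fun j => |x j|)) (hy : ∀ j, |y j| = φ |x j|) :
    dsort y = φ ∘ dsort x := by
  obtain ⟨σ, hσ⟩ := exists_perm_dsort_eq x
  have hyσ : ∀ i, |y (σ i)| = φ (dsort x i) := fun i => by rw [hy, hσ]
  have hanti : Antitone fun i => |y (σ i)| := fun i j hij => by
    simp only [hyσ, hσ]
    exact hφ ⟨_, rfl⟩ ⟨_, rfl⟩ (by simpa only [hσ] using dsort_antitone x hij)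
  funext i
  rw [dsort_eq_of_antitone hanti, hyσ, Function.comp_apply]

lemma dsort_of_abs_eq {x : Fin n → ℝ} {a : ℝ} (hx : ∀ j, x j ≠ 0 → |x j| = a)
    (i : Fin n) : dsort x i = if (i : ℕ) < #{j | x j ≠ 0} then a else 0 := by
  obtain ⟨σ, hσ⟩ := exists_perm_dsort_eq x
  have hpos : 0 < dsort x i ↔ (i : ℕ) < #{j | x j ≠ 0} := by
    rw [← Tuple.lt_card_gt_iff_apply_gt_of_antitone (dsort_antitone x),
      card_equiv σ (t := {j | x j ≠ 0}) (by simp [hσ])]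
  split_ifs with hi
  · rw [hσ] at hpos ⊢
    exact hx _ (abs_pos.1 (hpos.2 hi))
  · exact le_antisymm (not_lt.1 (mt hpos.1 hi)) (abs_nonneg _)

end Dsort

section KNormW

variable (w : Fin n → ℝ) (k : ℕ)

lemma kNormW_eq_sum_comp_dsort {x y : Fin n → ℝ} {φ : ℝ → ℝ}
    (hφ : MonotoneOn φ (Set.range fun j => |x j|)) (hy : ∀ j, |y j| = φ |x j|) :
    kNormW w k y = ∑ i : Fin n, if (i : ℕ) < k then w i * φ (dsort x i) else 0 := by
  simp [kNormW, dsort_eq_comp_of_monotoneOn hφ hy]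

lemma kNormW_smul (c : ℝ) (x : Fin n → ℝ) : kNormW w k (c • x) = |c| * kNormW w k x := by
  rw [kNormW_eq_sum_comp_dsort w k (x := x) (y := c • x) (φ := (|c| * ·))
    (fun _ _ _ _ h => mul_le_mul_of_nonneg_left h (abs_nonneg c)) (fun j => abs_mul c (x j)),
    kNormW, mul_sum]
  refine sum_congr rfl fun i _ => ?_
  split_ifs <;> ring

lemma kNormW_of_abs_eq {x : Fin n → ℝ} {a : ℝ} (hx : ∀ j, x j ≠ 0 → |x j| = a) :
    kNormW w k x = a * ∑ i : Fin n, if (i : ℕ) < min k #{j | x j ≠ 0} then w i else 0 := by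
  simp only [kNormW, dsort_of_abs_eq hx, mul_sum, lt_min_iff]
  refine sum_congr rfl fun i _ => ?_
  split_ifs <;> simp_all [mul_comm]

noncomputable def kNormWAbove (x : Fin n → ℝ) (a : ℝ) : ℝ :=
  ∑ i : Fin n, if (i : ℕ) < k ∧ a ≤ dsort x i then w i * dsort x i else 0

noncomputable def kNormWBelow (x : Fin n → ℝ) (a : ℝ) : ℝ :=
  ∑ i : Fin n, if (i : ℕ) < k ∧ dsort x i < a then w i * dsort x i else 0

lemma kNormWAbove_pos (hw : ∀ i, 0 ≤ w i) (hn : 0 < n) (hw₀ : 0 < w ⟨0, hn⟩) (hk : 0 < k)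
    {x : Fin n → ℝ} {a : ℝ} (ha : 0 < a) (hax : a ≤ dsort x ⟨0, hn⟩) :
    0 < kNormWAbove w k x a := by
  refine sum_pos' (fun i _ => ?_) ⟨⟨0, hn⟩, mem_univ _, ?_⟩
  · split_ifs
    exacts [mul_nonneg (hw i) (dsort_nonneg x i), le_rfl]
  · rw [if_pos ⟨hk, hax⟩]
    exact mul_pos hw₀ (ha.trans_le hax)

lemma kNormWBelow_nonneg (hw : ∀ i, 0 ≤ w i) (x : Fin n → ℝ) (a : ℝ) :
    0 ≤ kNormWBelow w k x a :=
  sum_nonneg fun i _ => by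
    split_ifs
    exacts [mul_nonneg (hw i) (dsort_nonneg x i), le_rfl]

lemma kNormW_rescale_levels (x : Fin n → ℝ) {a c₁ c₂ : ℝ}
    (hc₁ : 0 ≤ c₁) (hc₂ : 0 ≤ c₂)
    (hgap : ∀ i j, |x j| < a → a ≤ |x i| → c₂ * |x j| ≤ c₁ * |x i|) :
    kNormW w k (fun j => if a ≤ |x j| then c₁ * x j else c₂ * x j) =
      c₁ * kNormWAbove w k x a + c₂ * kNormWBelow w k x a := by
  rw [kNormW_eq_sum_comp_dsort w k (x := x) (φ := fun t => if a ≤ t then c₁ * t else c₂ * t),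
    kNormWAbove, kNormWBelow, mul_sum, mul_sum, ← sum_add_distrib]
  · refine sum_congr rfl fun i _ => ?_
    rcases le_or_gt a (dsort x i) with hi | hi <;> by_cases hik : (i : ℕ) < k <;>
      simp [hik, hi, not_lt.2, not_le.2] <;> ring
  · rintro _ ⟨j, rfl⟩ _ ⟨i, rfl⟩ hji
    dsimp only
    split_ifs with hj hi hi
    · exact mul_le_mul_of_nonneg_left hji hc₁
    · exact absurd (hj.trans hji) hi
    · exact hgap i j (not_le.1 hj) hi
    · exact mul_le_mul_of_nonneg_left hji hc₂
  · intro j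
    split_ifs
    · rw [abs_mul, abs_of_nonneg hc₁]
    · rw [abs_mul, abs_of_nonneg hc₂]

lemma kNormW_eq_kNormWAbove_add_kNormWBelow (x : Fin n → ℝ) (a : ℝ) :
    kNormW w k x = kNormWAbove w k x a + kNormWBelow w k x a := by
  simpa using kNormW_rescale_levels w k x zero_le_one zero_le_one
    (fun i j hj hi => by simpa using (hj.trans_le hi).le)

lemma kNormW_add_single_of_abs_eq {x : Fin n → ℝ} {a c : ℝ}
    (ha : ∀ j, x j ≠ 0 → |x j| = a) (hkS : k ≤ #{j | x j ≠ 0}) {j : Fin n} (hj : x j = 0)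
    (hc : |c| = a) (hc0 : c ≠ 0) :
    kNormW w k (x + Pi.single j c) = kNormW w k x := by
  have hsupp : #{i | (x + Pi.single j c : Fin n → ℝ) i ≠ 0} = #{i | x i ≠ 0} + 1 := by
    rw [← card_insert_of_notMem (s := {i | x i ≠ 0}) (by simpa using hj)]
    congr 1
    ext i
    by_cases hij : i = j
    · subst hij
      simp [hj, hc0]
    · simp [Pi.single_apply, hij]
  rw [kNormW_of_abs_eq w k (a := a), kNormW_of_abs_eq w k ha, hsupp, min_eq_left hkS,
    min_eq_left (by omega)]
  intro i hi
  by_cases hij : i = j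
  · subst hij
    simp [hj, hc]
  · simp only [Pi.add_apply, Pi.single_apply, hij, if_false, add_zero] at hi ⊢
    exact ha i hi

end KNormW

section Ball

variable {w : Fin n → ℝ} {k : ℕ} {x : Fin n → ℝ}

lemma eq_zero_of_zero_mem_extremePoints
    (h0 : (0 : Fin n → ℝ) ∈ {y | kNormW w k y ≤ 1}.extremePoints ℝ) (d : Fin n → ℝ) :
    d = 0 := by
  refine eq_zero_of_eventually_add_smul_mem h0 ?_
  have hlt : ∀ᶠ s in 𝓝 (0 : ℝ), |s| * kNormW w k d < 1 :=
    ContinuousAt.eventually_lt (by fun_prop) continuousAt_const (by simp)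
  filter_upwards [hlt] with s hs
  simpa [kNormW_smul] using hs.le

lemma kNormW_eq_one_of_mem_extremePoints (hx : x ∈ {y | kNormW w k y ≤ 1}.extremePoints ℝ)
    (hx0 : x ≠ 0) : kNormW w k x = 1 := by
  refine hx.1.antisymm (not_lt.1 fun hlt => hx0 (eq_zero_of_eventually_add_smul_mem hx ?_))
  have hlt' : ∀ᶠ s in 𝓝 (0 : ℝ), |1 + s| * kNormW w k x < 1 :=
    ContinuousAt.eventually_lt (by fun_prop) continuousAt_const (by simpa using hlt)
  filter_upwards [hlt'] with s hs
  show kNormW w k (x + s • x) ≤ 1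
  rw [show x + s • x = (1 + s) • x by rw [add_smul, one_smul], kNormW_smul]
  exact hs.le

lemma abs_eq_dsort_zero_of_mem_extremePoints (hw : ∀ i, 0 < w i) (hk : 0 < k) (hn : 0 < n)
    (hx : x ∈ {y | kNormW w k y ≤ 1}.extremePoints ℝ) {j : Fin n} (hj : x j ≠ 0) :
    |x j| = dsort x ⟨0, hn⟩ := by
  set a := dsort x ⟨0, hn⟩
  set P := kNormWAbove w k x a
  set Q := kNormWBelow w k x a
  by_contra hne
  have hja : |x j| < a := (abs_le_dsort_zero x hn j).lt_of_ne hne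
  have hP : 0 < P :=
    kNormWAbove_pos w k (fun i => (hw i).le) hn (hw _) hk ((abs_nonneg _).trans_lt hja) le_rfl
  have hQ : 0 ≤ Q := kNormWBelow_nonneg w k (fun i => (hw i).le) x a
  set d : Fin n → ℝ := fun i => if a ≤ |x i| then Q * x i else -P * x i
  suffices hd : d = 0 by simpa [d, not_le.2 hja, hP.ne', hj] using congrFun hd j
  refine eq_zero_of_eventually_add_smul_mem hx ?_
  have h₁ : ∀ᶠ s in 𝓝 (0 : ℝ), 0 < 1 + s * Q :=
    ContinuousAt.eventually_lt continuousAt_const (by fun_prop) (by simp)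
  have h₂ : ∀ᶠ s in 𝓝 (0 : ℝ), 0 < 1 - s * P :=
    ContinuousAt.eventually_lt continuousAt_const (by fun_prop) (by simp)
  have h₃ : ∀ᶠ s in 𝓝 (0 : ℝ), ∀ i, |x i| < a →
      (1 - s * P) * |x i| < (1 + s * Q) * a := by
    refine eventually_all.2 fun i => ?_
    by_cases hi : |x i| < a
    · filter_upwards [ContinuousAt.eventually_lt (f := fun s => (1 - s * P) * |x i|)
        (g := fun s => (1 + s * Q) * a) (by fun_prop) (by fun_prop) (by simpa using hi)]
        with s hs _ using hs
    · exact .of_forall fun _ h => absurd h hi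
  filter_upwards [h₁, h₂, h₃] with s hs₁ hs₂ hs₃
  have hxs :
      x + s • d = fun i => if a ≤ |x i| then (1 + s * Q) * x i else (1 - s * P) * x i := by
    funext i
    simp only [d, Pi.add_apply, Pi.smul_apply, smul_eq_mul]
    split_ifs <;> ring
  have hgap : ∀ i i', |x i'| < a → a ≤ |x i| →
      (1 - s * P) * |x i'| ≤ (1 + s * Q) * |x i| :=
    fun i i' hi' hi => (hs₃ i' hi').le.trans (mul_le_mul_of_nonneg_left hi hs₁.le)
  show kNormW w k (x + s • d) ≤ 1
  rw [hxs, kNormW_rescale_levels w k x hs₁.le hs₂.le hgap]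
  calc (1 + s * Q) * P + (1 - s * P) * Q = kNormW w k x := by
        rw [kNormW_eq_kNormWAbove_add_kNormWBelow w k x a]; ring
    _ ≤ 1 := hx.1

lemma card_support_eq_of_mem_extremePoints (hk : 0 < k)
    (hx : x ∈ {y | kNormW w k y ≤ 1}.extremePoints ℝ) {a : ℝ}
    (ha : ∀ j, x j ≠ 0 → |x j| = a) (hkS : k ≤ #{j | x j ≠ 0}) :
    #{j | x j ≠ 0} = n := by
  by_contra hne
  obtain ⟨j, hj⟩ : ∃ j, x j = 0 := by
    by_contra! h
    exact hne (by simp [h])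
  obtain ⟨j₀, hj₀⟩ : ∃ j, x j ≠ 0 := by
    by_contra! h
    simp [h] at hkS
    omega
  have ha0 : 0 < a := ha j₀ hj₀ ▸ abs_pos.2 hj₀
  have hadd : x + Pi.single j a ∈ {y | kNormW w k y ≤ 1} := by
    have hpos := kNormW_add_single_of_abs_eq w k ha hkS hj (abs_of_pos ha0) ha0.ne'
    simpa [hpos] using hx.1
  have hsub : x - Pi.single j a ∈ {y | kNormW w k y ≤ 1} := by
    have hneg := kNormW_add_single_of_abs_eq w k ha hkS hj
      (by rw [abs_neg, abs_of_pos ha0]) (neg_ne_zero.2 ha0.ne')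
    simpa [sub_eq_add_neg, ← Pi.single_neg, hneg] using hx.1
  simpa [ha0.ne'] using congrFun (eq_zero_of_add_mem_of_sub_mem hx hadd hsub) j

end Ball

theorem extreme_points_weighted_k_norm_ball_general {n : ℕ} (w : Fin n → ℝ)
    (hw_pos : ∀ i, 0 < w i)
    (k : ℕ) (hk1 : 1 ≤ k) (hkn : k ≤ n)
    (x : Fin n → ℝ)
    (hx : x ∈ Set.extremePoints ℝ {y : Fin n → ℝ | kNormW w k y ≤ 1}) :
    ∃ (S : Finset (Fin n)) (ε : Fin n → ℝ),
      (∀ i, ε i = 1 ∨ ε i = -1) ∧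
      ((1 ≤ S.card ∧ S.card ≤ k - 1) ∨ S.card = n) ∧
      x = fun i =>
        if i ∈ S then ε i / (∑ j : Fin n, if (j : ℕ) < min k S.card then w j else 0)
        else 0 := by
  have hn : 0 < n := by omega
  have hx0 : x ≠ 0 := fun h => one_ne_zero (α := ℝ) <| by
    simpa using
      congrFun (eq_zero_of_zero_mem_extremePoints (h ▸ hx) (Pi.single ⟨0, hn⟩ 1)) ⟨0, hn⟩
  have hflat : ∀ j, x j ≠ 0 → |x j| = dsort x ⟨0, hn⟩ := fun j hj =>
    abs_eq_dsort_zero_of_mem_extremePoints hw_pos hk1 hn hx hj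
  set S : Finset (Fin n) := {j | x j ≠ 0}
  have hS : 1 ≤ #S := by
    obtain ⟨j, hj⟩ := Function.ne_iff.1 hx0
    exact card_pos.2 ⟨j, by simpa [S] using hj⟩
  have ha : dsort x ⟨0, hn⟩ = 1 / ∑ j : Fin n, if (j : ℕ) < min k #S then w j else 0 :=
    eq_one_div_of_mul_eq_one_left <| by
      rw [← kNormW_of_abs_eq w k hflat, kNormW_eq_one_of_mem_extremePoints hx hx0]
  refine ⟨S, fun i => if 0 ≤ x i then 1 else -1,
    fun i => by beta_reduce; split_ifs <;> simp, ?_, funext fun i => ?_⟩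
  · by_cases hkS : k ≤ #S
    · exact .inr (card_support_eq_of_mem_extremePoints hk1 hx hflat hkS)
    · exact .inl ⟨hS, by omega⟩
  · by_cases hi : x i = 0
    · simp [S, hi]
    · rw [if_pos (by simpa [S] using hi), div_eq_mul_one_div, ← ha, ← hflat i hi]
      beta_reduce
      split_ifs with h
      · rw [abs_of_nonneg h, one_mul]
      · rw [abs_of_neg (not_le.1 h)]
        ring

/-- Lemma 2: every extreme point of the unit ball of the weighted vector `k`-norm
has the form `Σ_{i∈S} (±e_i)/(w₁+⋯+w_{min(k,|S|)})` with `1 ≤ |S| ≤ k-1` or `|S| = n`. -/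
theorem extreme_points_weighted_k_norm_ball {n : ℕ} (w : Fin n → ℝ)
    (hw_mono : ∀ i j : Fin n, i ≤ j → w j ≤ w i) (hw_pos : ∀ i, 0 < w i)
    (k : ℕ) (hk1 : 1 ≤ k) (hkn : k ≤ n)
    (x : Fin n → ℝ)
    (hx : x ∈ Set.extremePoints ℝ {y : Fin n → ℝ | kNormW w k y ≤ 1}) :
    ∃ (S : Finset (Fin n)) (ε : Fin n → ℝ),
      (∀ i, ε i = 1 ∨ ε i = -1) ∧
      ((1 ≤ S.card ∧ S.card ≤ k - 1) ∨ S.card = n) ∧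
      x = fun i =>
        if i ∈ S then ε i / (∑ j : Fin n, if (j : ℕ) < min k S.card then w j else 0)
        else 0 :=
  extreme_points_weighted_k_norm_ball_general w hw_pos k hk1 hkn x hx
end

section
/- Let μ be the uniform probability measure on {1,…,n} and let f, g ∈ ℝⁿ. Define Θ_x by (Θ_x)_{ij} = (x_i + x_j)/(2n) for i ≠ j and diagonal entries making row sums zero. Then fg − E(fg)·𝟙 = −Θ_f (g − E g·𝟙) − Θ_g (f − E f·𝟙), where fg is the coordinatewise product and E h = n^{−1} Σ_i h_i. -/
open Finset

/-- The matrix `Θ_x`: off-diagonal entries `(x_i + x_j)/(2n)`, diagonal entries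
chosen so that all row sums vanish. -/
noncomputable def Theta {n : ℕ} (x : Fin n → ℝ) : Matrix (Fin n) (Fin n) ℝ :=
  Matrix.of fun i j =>
    if i = j then -∑ l ∈ Finset.univ.erase i, (x i + x l) / (2 * n)
    else (x i + x j) / (2 * n)

lemma theta_mulVec {n : ℕ} (x v : Fin n → ℝ) (i : Fin n) :
    (Theta x).mulVec v i = ∑ j, (x i + x j) / (2 * n) * (v j - v i) := by
  rw [Matrix.mulVec, dotProduct]
  rw [← Finset.add_sum_erase _ _ (Finset.mem_univ i),
      ← Finset.add_sum_erase (f := fun j => (x i + x j) / (2 * n) * (v j - v i)) _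
        (Finset.mem_univ i)]
  simp only [Theta, Matrix.of_apply, if_pos rfl, if_true, sub_self, mul_zero, zero_add]
  rw [neg_mul, Finset.sum_mul, neg_add_eq_sub, ← Finset.sum_sub_distrib]
  refine Finset.sum_congr rfl fun j hj => ?_
  rw [if_neg (Finset.ne_of_mem_erase hj).symm]
  ring

/-- (3.3): `fg − E(fg)·𝟙 = −Θ_f (g − Eg·𝟙) − Θ_g (f − Ef·𝟙)` for the uniform
probability measure on `{1,…,n}`. -/
theorem centered_product_decomposition {n : ℕ} (hn : 0 < n) (f g : Fin n → ℝ) :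
    (fun i => f i * g i - (n : ℝ)⁻¹ * ∑ j, f j * g j) =
      -(Theta f).mulVec (fun i => g i - (n : ℝ)⁻¹ * ∑ j, g j)
      - (Theta g).mulVec (fun i => f i - (n : ℝ)⁻¹ * ∑ j, f j) := by
  have hn' : (n : ℝ) ≠ 0 := Nat.cast_ne_zero.mpr hn.ne'
  funext i
  simp only [Pi.sub_apply, Pi.neg_apply, theta_mulVec]
  have h1 : ∀ j : Fin n,
      (g j - (n : ℝ)⁻¹ * ∑ k, g k) - (g i - (n : ℝ)⁻¹ * ∑ k, g k) = g j - g i := by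
    intro j; ring
  have h2 : ∀ j : Fin n,
      (f j - (n : ℝ)⁻¹ * ∑ k, f k) - (f i - (n : ℝ)⁻¹ * ∑ k, f k) = f j - f i := by
    intro j; ring
  simp only [h1, h2]
  rw [← Finset.sum_neg_distrib, ← Finset.sum_sub_distrib]
  have : f i * g i - (n : ℝ)⁻¹ * ∑ j, f j * g j
      = ∑ j : Fin n, (f i * g i - f j * g j) / n := by
    simp only [sub_div, Finset.sum_sub_distrib, Finset.sum_const, card_univ,
      Fintype.card_fin, nsmul_eq_mul, ← Finset.sum_div]
    field_simp
  rw [this]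
  refine Finset.sum_congr rfl fun j _ => ?_
  field_simp
  ring
end

section
/- Let L be an n×n real symmetric matrix with zero row and column sums and nonnegative off-diagonal entries (a Laplacian matrix). Then for any symmetric norm ‖·‖ on ℝⁿ and any x ∈ ℝⁿ with Σ_i x_i = 0, one has ‖L x‖ ≤ n (max_{i≠j} L_{ij}) ‖x‖. -/
/-!
The matrix `D = c J - L`, with `J` the all-ones matrix and `c` an upper bound for the off-diagonal
entries of `L`, is nonnegative with all row and column sums equal to `n c`. By Birkhoff's theorem
it is `n c` times a convex combination of permutation matrices, and on vectors with zero
coordinate sum it acts as `-L`. A permutation-invariant seminorm does not increase under convex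
combinations of permutations, whence `‖L x‖ = ‖D x‖ ≤ n c ‖x‖`.
-/

open Finset Matrix

variable {ι : Type*} [Fintype ι]

namespace Matrix

variable {L : Matrix ι ι ℝ}

theorem of_const_sub_mulVec (c : ℝ) {x : ι → ℝ} (hx : ∑ i, x i = 0) :
    of (fun i j => c - L i j) *ᵥ x = -(L *ᵥ x) := by
  ext i
  simp [mulVec, dotProduct, sub_mul, sum_sub_distrib, ← mul_sum, hx]

variable [DecidableEq ι]

theorem diag_nonpos_of_sum_row_eq_zero (hL_rows : ∀ i, ∑ j, L i j = 0)
    (hL_offdiag : ∀ i j, i ≠ j → 0 ≤ L i j) (i : ι) : L i i ≤ 0 := by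
  have hsplit := hL_rows i
  rw [← add_sum_erase _ _ (mem_univ i)] at hsplit
  have hrest : 0 ≤ ∑ j ∈ univ.erase i, L i j :=
    sum_nonneg fun j hj => hL_offdiag i j (ne_of_mem_erase hj).symm
  linarith

theorem of_const_sub_nonneg (hL_rows : ∀ i, ∑ j, L i j = 0)
    (hL_offdiag : ∀ i j, i ≠ j → 0 ≤ L i j) {c : ℝ} (hc : 0 ≤ c)
    (hLc : ∀ i j, i ≠ j → L i j ≤ c) (i j : ι) : 0 ≤ of (fun i j => c - L i j) i j := by
  rw [of_apply, sub_nonneg]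
  obtain rfl | hij := eq_or_ne i j
  · exact (diag_nonpos_of_sum_row_eq_zero hL_rows hL_offdiag i).trans hc
  · exact hLc i j hij

end Matrix

namespace Seminorm

variable [DecidableEq ι] (p : Seminorm ℝ (ι → ℝ))

theorem mulVec_le_of_mem_doublyStochastic (hp : ∀ (σ : Equiv.Perm ι) x, p (x ∘ σ) = p x)
    {D : Matrix ι ι ℝ} (hD : D ∈ doublyStochastic ℝ ι) (x : ι → ℝ) :
    p (D *ᵥ x) ≤ p x := by
  obtain ⟨w, hw_nonneg, hw_sum, rfl⟩ := exists_eq_sum_perm_of_mem_doublyStochastic hD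
  calc p ((∑ σ, w σ • σ.permMatrix ℝ) *ᵥ x) = p (∑ σ, w σ • (x ∘ σ)) := by
        simp only [sum_mulVec, smul_mulVec, permMatrix_mulVec]
    _ ≤ ∑ σ, p (w σ • (x ∘ σ)) :=
        le_sum_of_subadditive p (map_zero p).le (map_add_le_add p) _ _
    _ = ∑ σ, w σ * p x := by
        refine sum_congr rfl fun σ _ => ?_
        rw [map_smul_eq_mul, Real.norm_of_nonneg (hw_nonneg σ), hp]
    _ = p x := by rw [← sum_mul, hw_sum, one_mul]

theorem mulVec_le_of_nonneg_of_sum_eq (hp : ∀ (σ : Equiv.Perm ι) x, p (x ∘ σ) = p x)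
    {D : Matrix ι ι ℝ} {s : ℝ} (hs : 0 ≤ s) (hD_nonneg : ∀ i j, 0 ≤ D i j)
    (hD_rows : ∀ i, ∑ j, D i j = s) (hD_cols : ∀ j, ∑ i, D i j = s) (x : ι → ℝ) :
    p (D *ᵥ x) ≤ s * p x := by
  obtain ⟨D', hD', rfl⟩ :=
    (exists_mem_doublyStochastic_eq_smul_iff hs).2 ⟨hD_nonneg, hD_rows, hD_cols⟩
  rw [smul_mulVec, map_smul_eq_mul, Real.norm_of_nonneg hs]
  exact mul_le_mul_of_nonneg_left (p.mulVec_le_of_mem_doublyStochastic hp hD' x) hs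

theorem laplacian_mulVec_le (hp : ∀ (σ : Equiv.Perm ι) x, p (x ∘ σ) = p x)
    {L : Matrix ι ι ℝ} (hL_rows : ∀ i, ∑ j, L i j = 0) (hL_cols : ∀ j, ∑ i, L i j = 0)
    (hL_offdiag : ∀ i j, i ≠ j → 0 ≤ L i j) {c : ℝ} (hc : 0 ≤ c)
    (hLc : ∀ i j, i ≠ j → L i j ≤ c) {x : ι → ℝ} (hx : ∑ i, x i = 0) :
    p (L *ᵥ x) ≤ Fintype.card ι * c * p x := by
  rw [← map_neg_eq_map, ← of_const_sub_mulVec c hx]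
  refine p.mulVec_le_of_nonneg_of_sum_eq hp (by positivity)
    (of_const_sub_nonneg hL_rows hL_offdiag hc hLc) (fun i => ?_) (fun j => ?_) x
  · simp [sum_sub_distrib, hL_rows]
  · simp [sum_sub_distrib, hL_cols]

end Seminorm

theorem laplacian_symmetric_norm_bound_general {n : ℕ}
    (L : Matrix (Fin n) (Fin n) ℝ)
    (hL_symm : ∀ i j, L i j = L j i)
    (hL_rows : ∀ i, ∑ j, L i j = 0)
    (hL_offdiag : ∀ i j, i ≠ j → 0 ≤ L i j)
    (N : (Fin n → ℝ) → ℝ)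
    (hN_add : ∀ a b, N (a + b) ≤ N a + N b)
    (hN_smul : ∀ (c : ℝ) a, N (c • a) = |c| * N a)
    (hN_perm : ∀ (σ : Equiv.Perm (Fin n)) a, N (a ∘ σ) = N a)
    (x : Fin n → ℝ) (hx : ∑ i, x i = 0) :
    N (L.mulVec x) ≤ n * sSup {c : ℝ | ∃ i j, i ≠ j ∧ c = L i j} * N x := by
  set M := sSup {c : ℝ | ∃ i j, i ≠ j ∧ c = L i j}
  have hM_nonneg : 0 ≤ M := Real.sSup_nonneg <| by
    rintro c ⟨i, j, hij, rfl⟩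
    exact hL_offdiag i j hij
  have hL_le : ∀ i j, i ≠ j → L i j ≤ M := fun i j hij =>
    le_csSup ((Set.finite_range fun ij : Fin n × Fin n => L ij.1 ij.2).subset
      (by rintro c ⟨i, j, -, rfl⟩; exact ⟨(i, j), rfl⟩)).bddAbove ⟨i, j, hij, rfl⟩
  have hL_cols : ∀ j, ∑ i, L i j = 0 := fun j => by simpa only [hL_symm] using hL_rows j
  let p : Seminorm ℝ (Fin n → ℝ) := .of N hN_add fun c a => by rw [Real.norm_eq_abs, hN_smul]
  have hbound := p.laplacian_mulVec_le hN_perm hL_rows hL_cols hL_offdiag hM_nonneg hL_le hx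
  rwa [Fintype.card_fin] at hbound

/-- Theorem 2: for an `n×n` Laplacian matrix `L` (symmetric, zero row and column
sums, nonnegative off-diagonal entries), any symmetric norm `N` and any vector
`x` with zero coordinate sum, `‖Lx‖ ≤ n (max_{i≠j} L_{ij}) ‖x‖`. -/
theorem laplacian_symmetric_norm_bound {n : ℕ}
    (L : Matrix (Fin n) (Fin n) ℝ)
    (hL_symm : ∀ i j, L i j = L j i)
    (hL_rows : ∀ i, ∑ j, L i j = 0)
    (hL_offdiag : ∀ i j, i ≠ j → 0 ≤ L i j)
    (N : (Fin n → ℝ) → ℝ)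
    (hN_add : ∀ a b, N (a + b) ≤ N a + N b)
    (hN_smul : ∀ (c : ℝ) a, N (c • a) = |c| * N a)
    (hN_def : ∀ a, N a = 0 → a = 0)
    (hN_perm : ∀ (σ : Equiv.Perm (Fin n)) a, N (a ∘ σ) = N a)
    (hN_sign : ∀ (ε a : Fin n → ℝ), (∀ i, ε i = 1 ∨ ε i = -1) →
      N (fun i => ε i * a i) = N a)
    (x : Fin n → ℝ) (hx : ∑ i, x i = 0) :
    N (L.mulVec x) ≤ n * sSup {c : ℝ | ∃ i j, i ≠ j ∧ c = L i j} * N x :=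
  laplacian_symmetric_norm_bound_general L hL_symm hL_rows hL_offdiag N hN_add hN_smul hN_perm x hx
end

section
/- Let L be an n×n Laplacian matrix (symmetric, zero row and column sums, nonnegative off-diagonals). Define x_∞(i) = max_{j≠i} L_{ij} and L̂ = L − x_∞ ⊗ 𝟙. Then the operator norms satisfy ‖L̂‖_{ℓ¹→ℓ¹} ≤ n·max_{i≠j} L_{ij} and ‖L̂‖_{ℓ^∞→ℓ^∞} ≤ n·max_{i≠j} L_{ij}. -/
open Finset

/-! The diagonal of a matrix with zero row sums and nonnegative off-diagonal entries is
nonpositive, so every entry of row `i` is at most its off-diagonal maximum `x_∞(i)`, and the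
absolute values in `L̂` can be dropped. Each row or column sum of `|L̂|` is then a sum of `x_∞(i)`
minus a row or column sum of `L`, which vanishes, and every `x_∞(i)` is at most the global
off-diagonal maximum. -/

namespace Matrix

variable {ι : Type*} (L : Matrix ι ι ℝ)

/-- The paper's `x_∞(i)`; for a `1 × 1` matrix it is the junk value `sSup ∅ = 0`. -/
noncomputable def offDiagRowMax (i : ι) : ℝ :=
  sSup {c : ℝ | ∃ l, l ≠ i ∧ c = L i l}

noncomputable def offDiagMax : ℝ :=
  sSup {c : ℝ | ∃ i j, i ≠ j ∧ c = L i j}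

variable {L}

theorem le_offDiagRowMax [Finite ι] {i l : ι} (hl : l ≠ i) : L i l ≤ L.offDiagRowMax i := by
  refine le_csSup ((Set.finite_range (L i)).subset ?_).bddAbove ⟨l, hl, rfl⟩
  rintro c ⟨l, -, rfl⟩
  exact ⟨l, rfl⟩

theorem le_offDiagMax [Finite ι] {i j : ι} (hij : i ≠ j) : L i j ≤ L.offDiagMax := by
  refine le_csSup ((Set.finite_range fun p : ι × ι => L p.1 p.2).subset ?_).bddAbove
    ⟨i, j, hij, rfl⟩
  rintro c ⟨i, j, -, rfl⟩
  exact ⟨(i, j), rfl⟩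

section NonnegOffDiag

variable (hoff : ∀ i j, i ≠ j → 0 ≤ L i j)
include hoff

theorem offDiagRowMax_nonneg (i : ι) : 0 ≤ L.offDiagRowMax i :=
  Real.sSup_nonneg <| by rintro c ⟨l, hl, rfl⟩; exact hoff i l hl.symm

theorem offDiagMax_nonneg : 0 ≤ L.offDiagMax :=
  Real.sSup_nonneg <| by rintro c ⟨i, j, hij, rfl⟩; exact hoff i j hij

theorem offDiagRowMax_le_offDiagMax [Finite ι] (i : ι) : L.offDiagRowMax i ≤ L.offDiagMax :=
  Real.sSup_le (by rintro c ⟨l, hl, rfl⟩; exact le_offDiagMax hl.symm)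
    (offDiagMax_nonneg hoff)

variable [Fintype ι] (hrows : ∀ i, ∑ j, L i j = 0)
include hrows

theorem diag_nonpos (i : ι) : L i i ≤ 0 := by
  classical
  have hsplit : L i i + ∑ l ∈ univ.erase i, L i l = 0 :=
    (add_sum_erase _ _ (mem_univ i)).trans (hrows i)
  have hrest : 0 ≤ ∑ l ∈ univ.erase i, L i l :=
    sum_nonneg fun l hl => hoff i l (ne_of_mem_erase hl).symm
  linarith

theorem le_offDiagRowMax_of_rowSum_eq_zero (i j : ι) : L i j ≤ L.offDiagRowMax i := by
  rcases eq_or_ne j i with rfl | hj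
  · exact (diag_nonpos hoff hrows j).trans (offDiagRowMax_nonneg hoff j)
  · exact le_offDiagRowMax hj

theorem abs_sub_offDiagRowMax (i j : ι) :
    |L i j - L.offDiagRowMax i| = L.offDiagRowMax i - L i j := by
  rw [abs_sub_comm, abs_of_nonneg]
  exact sub_nonneg.2 (le_offDiagRowMax_of_rowSum_eq_zero hoff hrows i j)

theorem sum_abs_sub_offDiagRowMax_row_le (i : ι) :
    ∑ j, |L i j - L.offDiagRowMax i| ≤ Fintype.card ι * L.offDiagMax := by
  calc ∑ j, |L i j - L.offDiagRowMax i|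
      = ∑ _j : ι, L.offDiagRowMax i - ∑ j, L i j := by
        simp only [abs_sub_offDiagRowMax hoff hrows, sum_sub_distrib]
    _ = Fintype.card ι * L.offDiagRowMax i := by simp [hrows i]
    _ ≤ Fintype.card ι * L.offDiagMax := by
        gcongr
        exact offDiagRowMax_le_offDiagMax hoff i

theorem sum_abs_sub_offDiagRowMax_col_le (hcols : ∀ j, ∑ i, L i j = 0) (j : ι) :
    ∑ i, |L i j - L.offDiagRowMax i| ≤ Fintype.card ι * L.offDiagMax := by
  calc ∑ i, |L i j - L.offDiagRowMax i|
      = ∑ i, L.offDiagRowMax i - ∑ i, L i j := by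
        simp only [abs_sub_offDiagRowMax hoff hrows, sum_sub_distrib]
    _ = ∑ i, L.offDiagRowMax i := by rw [hcols j, sub_zero]
    _ ≤ ∑ _i : ι, L.offDiagMax := sum_le_sum fun i _ => offDiagRowMax_le_offDiagMax hoff i
    _ = Fintype.card ι * L.offDiagMax := by simp

end NonnegOffDiag

end Matrix

/-- For an `n×n` Laplacian matrix `L`, setting `x_∞(i) = max_{j≠i} L_{ij}` and
`L̂ = L − x_∞ ⊗ 𝟙`, one has `‖L̂‖_{ℓ¹→ℓ¹} ≤ n·max_{i≠j} L_{ij}` (column sums) and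
`‖L̂‖_{ℓ^∞→ℓ^∞} ≤ n·max_{i≠j} L_{ij}` (row sums). -/
theorem laplacian_hat_operator_norms {n : ℕ}
    (L : Matrix (Fin n) (Fin n) ℝ)
    (hL_symm : ∀ i j, L i j = L j i)
    (hL_rows : ∀ i, ∑ j, L i j = 0)
    (hL_offdiag : ∀ i j, i ≠ j → 0 ≤ L i j) :
    (∀ j, ∑ i, |L i j - sSup {c : ℝ | ∃ l, l ≠ i ∧ c = L i l}| ≤
        n * sSup {c : ℝ | ∃ i j, i ≠ j ∧ c = L i j}) ∧
    (∀ i, ∑ j, |L i j - sSup {c : ℝ | ∃ l, l ≠ i ∧ c = L i l}| ≤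
        n * sSup {c : ℝ | ∃ i j, i ≠ j ∧ c = L i j}) := by
  have hL_cols : ∀ j, ∑ i, L i j = 0 := fun j => by simpa only [hL_symm _ j] using hL_rows j
  refine ⟨fun j => ?_, fun i => ?_⟩
  · have h := L.sum_abs_sub_offDiagRowMax_col_le hL_offdiag hL_rows hL_cols j
    rwa [Fintype.card_fin] at h
  · have h := L.sum_abs_sub_offDiagRowMax_row_le hL_offdiag hL_rows i
    rwa [Fintype.card_fin] at h
end

section
/- Let φ : ℝ → ℝ be monotone increasing and Lipschitz, let x₁, …, x_n be distinct reals, and let Θ[x;φ] be the matrix with off-diagonal entries (φ(x_i)−φ(x_j))/(x_i−x_j) and diagonal entries making all row sums zero. Then for any symmetric norm ‖·‖ on ℝⁿ and any u ∈ ℝⁿ with Σ_i u_i = 0, one has ‖Θ[x;φ] u‖ ≤ n·Lip(φ)·‖u‖. -/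
/-!
Write `J` for the all-ones matrix. Since the divided differences of `φ` lie in `[0, K]`, the
matrix `K • J - Θ[x;φ]` has nonnegative entries, and since `Θ[x;φ]` is symmetric with zero row
sums, all its row and column sums equal `n K`. Hence it is `n K` times a doubly stochastic
matrix, i.e. by Birkhoff `n K` times a convex combination of permutation matrices. On vectors
with zero coordinate sum `J` vanishes, so `Θ[x;φ] u = -n K ∑ w_σ (u ∘ σ)`, and a
permutation-invariant seminorm of the right-hand side is at most `n K ‖u‖`.
-/

open Finset

/-- The matrix `Θ[x;φ]`: off-diagonal entries `(φ(x_i) − φ(x_j))/(x_i − x_j)`,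
diagonal entries chosen so that all row sums vanish. -/
noncomputable def ThetaPhi {n : ℕ} (x : Fin n → ℝ) (φ : ℝ → ℝ) :
    Matrix (Fin n) (Fin n) ℝ :=
  Matrix.of fun i j =>
    if i = j then
      -∑ l ∈ Finset.univ.erase i, (φ (x i) - φ (x l)) / (x i - x l)
    else (φ (x i) - φ (x j)) / (x i - x j)

open Matrix

lemma sub_div_sub_mem_Icc_of_monotone_of_lipschitzWith {φ : ℝ → ℝ} {K : NNReal}
    (hmono : Monotone φ) (hlip : LipschitzWith K φ) (a b : ℝ) :
    (φ a - φ b) / (a - b) ∈ Set.Icc 0 (K : ℝ) := by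
  refine ⟨?_, ?_⟩
  · rw [← slope_def_field]
    exact (hmono.monotoneOn Set.univ).slope_nonneg trivial trivial
  · calc (φ a - φ b) / (a - b) ≤ |(φ a - φ b) / (a - b)| := le_abs_self _
      _ = |φ a - φ b| / |a - b| := abs_div _ _
      _ ≤ K := div_le_of_le_mul₀ (abs_nonneg _) K.2 (by
          simpa only [Real.dist_eq] using hlip.dist_le_mul a b)

lemma Matrix.of_const_mulVec_eq_zero {ι α : Type*} [Fintype ι] [NonUnitalNonAssocSemiring α]
    {u : ι → α} (hu : ∑ i, u i = 0) (c : α) : Matrix.of (fun _ _ : ι => c) *ᵥ u = 0 := by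
  ext i
  simp [mulVec, dotProduct, ← Finset.mul_sum, hu]

lemma exists_mem_doublyStochastic_eq_smul {ι : Type*} [Fintype ι] [DecidableEq ι]
    {B : Matrix ι ι ℝ} {c : ℝ} (hB : ∀ i j, 0 ≤ B i j) (hrow : ∀ i, ∑ j, B i j = c)
    (hcol : ∀ j, ∑ i, B i j = c) : ∃ S ∈ doublyStochastic ℝ ι, B = c • S := by
  rcases eq_or_ne c 0 with rfl | hc
  · refine ⟨1, one_mem _, ?_⟩
    ext i j
    simpa using (sum_eq_zero_iff_of_nonneg fun j _ => hB i j).1 (hrow i) j (mem_univ j)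
  refine ⟨c⁻¹ • B, mem_doublyStochastic_iff_sum.2 ⟨fun i j => ?_, fun i => ?_, fun j => ?_⟩,
    by rw [smul_smul, mul_inv_cancel₀ hc, one_smul]⟩
  · have hc₀ : 0 ≤ c := hrow i ▸ sum_nonneg fun j _ => hB i j
    exact mul_nonneg (inv_nonneg.2 hc₀) (hB i j)
  · simp [← Finset.mul_sum, hrow i, hc]
  · simp [← Finset.mul_sum, hcol j, hc]

section PermInvariantSeminorm

variable {ι : Type*} [Fintype ι] [DecidableEq ι] (N : (ι → ℝ) → ℝ)
  (hN_add : ∀ a b, N (a + b) ≤ N a + N b) (hN_smul : ∀ (c : ℝ) a, N (c • a) = |c| * N a)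
  (hN_perm : ∀ (σ : Equiv.Perm ι) a, N (a ∘ σ) = N a)

include hN_add hN_smul hN_perm in
lemma apply_mulVec_le_of_mem_doublyStochastic {S : Matrix ι ι ℝ} (hS : S ∈ doublyStochastic ℝ ι)
    (v : ι → ℝ) : N (S *ᵥ v) ≤ N v := by
  obtain ⟨w, hw_nonneg, hw_sum, rfl⟩ := exists_eq_sum_perm_of_mem_doublyStochastic hS
  have hN_zero : N 0 ≤ 0 := by simpa using (hN_smul 0 0).le
  calc N ((∑ σ, w σ • σ.permMatrix ℝ) *ᵥ v) = N (∑ σ, w σ • (v ∘ σ)) := by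
        simp only [sum_mulVec, smul_mulVec, permMatrix_mulVec]
    _ ≤ ∑ σ, N (w σ • (v ∘ σ)) := le_sum_of_subadditive N hN_zero hN_add _ _
    _ = N v := by
        simp only [hN_smul, hN_perm, abs_of_nonneg (hw_nonneg _), ← Finset.sum_mul, hw_sum,
          one_mul]

end PermInvariantSeminorm

section ThetaPhi

variable {n : ℕ} (x : Fin n → ℝ) (φ : ℝ → ℝ)

lemma thetaPhi_apply_of_ne {i j : Fin n} (h : i ≠ j) :
    ThetaPhi x φ i j = (φ (x i) - φ (x j)) / (x i - x j) := by
  simp [ThetaPhi, h]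

lemma thetaPhi_apply_self (i : Fin n) :
    ThetaPhi x φ i i = -∑ l ∈ univ.erase i, ThetaPhi x φ i l := by
  rw [sum_congr rfl fun l hl => thetaPhi_apply_of_ne x φ (ne_of_mem_erase hl).symm]
  simp [ThetaPhi]

lemma sum_thetaPhi_row (i : Fin n) : ∑ j, ThetaPhi x φ i j = 0 := by
  rw [← add_sum_erase _ _ (mem_univ i), thetaPhi_apply_self, neg_add_cancel]

lemma isSymm_thetaPhi : (ThetaPhi x φ).IsSymm := by
  refine IsSymm.ext_iff.2 fun i j => ?_
  rcases eq_or_ne i j with rfl | h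
  · rfl
  rw [thetaPhi_apply_of_ne x φ h, thetaPhi_apply_of_ne x φ h.symm, ← neg_sub (x i),
    ← neg_sub (φ (x i)), neg_div_neg_eq]

variable {φ} {K : NNReal} (hmono : Monotone φ) (hlip : LipschitzWith K φ)
include hmono hlip

lemma thetaPhi_apply_mem_Icc_of_ne {i j : Fin n} (h : i ≠ j) :
    ThetaPhi x φ i j ∈ Set.Icc 0 (K : ℝ) :=
  thetaPhi_apply_of_ne x φ h ▸ sub_div_sub_mem_Icc_of_monotone_of_lipschitzWith hmono hlip _ _

lemma thetaPhi_apply_self_nonpos (i : Fin n) : ThetaPhi x φ i i ≤ 0 := by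
  rw [thetaPhi_apply_self, neg_nonpos]
  exact sum_nonneg fun l hl =>
    (thetaPhi_apply_mem_Icc_of_ne x hmono hlip (ne_of_mem_erase hl).symm).1

lemma exists_const_sub_thetaPhi_eq_smul :
    ∃ S ∈ doublyStochastic ℝ (Fin n),
      Matrix.of (fun _ _ => (K : ℝ)) - ThetaPhi x φ = (n * K : ℝ) • S := by
  have hrow (i : Fin n) : ∑ j, ((K : ℝ) - ThetaPhi x φ i j) = n * K := by
    simp [sum_sub_distrib, sum_thetaPhi_row]
  refine exists_mem_doublyStochastic_eq_smul (fun i j => ?_) hrow fun j => ?_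
  · show 0 ≤ (K : ℝ) - ThetaPhi x φ i j
    rcases eq_or_ne i j with rfl | h
    · linarith [K.2, thetaPhi_apply_self_nonpos x hmono hlip i]
    · linarith [(thetaPhi_apply_mem_Icc_of_ne x hmono hlip h).2]
  · show ∑ i, ((K : ℝ) - ThetaPhi x φ i j) = n * K
    simpa only [(isSymm_thetaPhi x φ).apply j] using hrow j

end ThetaPhi

theorem thetaPhi_symmetric_norm_bound_general {n : ℕ} (φ : ℝ → ℝ) (K : NNReal)
    (hφ_mono : Monotone φ) (hφ_lip : LipschitzWith K φ)
    (x : Fin n → ℝ)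
    (N : (Fin n → ℝ) → ℝ)
    (hN_add : ∀ a b, N (a + b) ≤ N a + N b)
    (hN_smul : ∀ (c : ℝ) a, N (c • a) = |c| * N a)
    (hN_perm : ∀ (σ : Equiv.Perm (Fin n)) a, N (a ∘ σ) = N a)
    (u : Fin n → ℝ) (hu : ∑ i, u i = 0) :
    N ((ThetaPhi x φ).mulVec u) ≤ n * K * N u := by
  obtain ⟨S, hS, hSΘ⟩ := exists_const_sub_thetaPhi_eq_smul x hφ_mono hφ_lip
  have hΘ : ThetaPhi x φ *ᵥ u = (-(n * K : ℝ)) • (S *ᵥ u) := by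
    rw [neg_smul, ← smul_mulVec, ← hSΘ, sub_mulVec, of_const_mulVec_eq_zero hu, zero_sub,
      neg_neg]
  calc N (ThetaPhi x φ *ᵥ u) = n * K * N (S *ᵥ u) := by
        rw [hΘ, hN_smul, abs_neg, abs_of_nonneg (by positivity)]
    _ ≤ n * K * N u := by
        gcongr
        exact apply_mulVec_le_of_mem_doublyStochastic N hN_add hN_smul hN_perm hS u

/-- Corollary 1: for monotone increasing Lipschitz `φ`, a symmetric norm `N`
and `u` with zero coordinate sum, `‖Θ[x;φ] u‖ ≤ n·Lip(φ)·‖u‖`. -/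
theorem thetaPhi_symmetric_norm_bound {n : ℕ} (φ : ℝ → ℝ) (K : NNReal)
    (hφ_mono : Monotone φ) (hφ_lip : LipschitzWith K φ)
    (x : Fin n → ℝ) (hx : Function.Injective x)
    (N : (Fin n → ℝ) → ℝ)
    (hN_add : ∀ a b, N (a + b) ≤ N a + N b)
    (hN_smul : ∀ (c : ℝ) a, N (c • a) = |c| * N a)
    (hN_def : ∀ a, N a = 0 → a = 0)
    (hN_perm : ∀ (σ : Equiv.Perm (Fin n)) a, N (a ∘ σ) = N a)
    (hN_sign : ∀ (ε a : Fin n → ℝ), (∀ i, ε i = 1 ∨ ε i = -1) →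
      N (fun i => ε i * a i) = N a)
    (u : Fin n → ℝ) (hu : ∑ i, u i = 0) :
    N ((ThetaPhi x φ).mulVec u) ≤ n * K * N u :=
  thetaPhi_symmetric_norm_bound_general φ K hφ_mono hφ_lip x N hN_add hN_smul hN_perm u hu
end

section
/- Let ‖·‖ be a symmetric norm on ℝⁿ, φ : ℝ → ℝ a monotone Lipschitz function, and f = (f₁,…,f_n) ∈ ℝⁿ. Then ‖φ(f) − (n^{−1}Σ_i φ(f_i)) 𝟙‖ ≤ Lip(φ)·‖f − (n^{−1}Σ_i f_i) 𝟙‖, where φ is applied coordinatewise. -/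
/-!
Transferring an amount `s ≤ z j - z i` from coordinate `j` to coordinate `i` is a convex
combination of `z` and `z ∘ swap i j`, so it does not increase a permutation-invariant seminorm.
Lowering the coordinates in `B` by `t`, when each of them exceeds each coordinate outside `B` by at
least `t`, becomes after centering a succession of such transfers of size `t / n`, one for every
pair in `Bᶜ × B`.

For `ψ` monotone and `K`-Lipschitz, let `h_c` agree with `ψ` below `c` and have slope `K` above
`c`. As `c` runs from below `min f` to above `max f`, `h_c ∘ f` goes from `K f + const` to `ψ ∘ f`,
and between consecutive values of `f` it changes by exactly such a lowering. The antitone case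
follows by passing to `-ψ`.
-/

open Finset

theorem Finset.card_filter_insert {α : Type*} [DecidableEq α] {S : Finset α} {q : α} (hq : q ∉ S)
    (P : α → Prop) [DecidablePred P] :
    #{r ∈ insert q S | P r} = #{r ∈ S | P r} + if P q then 1 else 0 := by
  rw [filter_insert]
  split_ifs
  · rw [card_insert_of_notMem (by simp [hq])]
  · rfl

variable {ι : Type*}

section Transfer

variable [DecidableEq ι]

def transfer (S : Finset (ι × ι)) : ι → ℝ := ∑ q ∈ S, (Pi.single q.1 1 - Pi.single q.2 1)

theorem transfer_apply (S : Finset (ι × ι)) (k : ι) :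
    transfer S k = #{q ∈ S | q.1 = k} - #{q ∈ S | q.2 = k} := by
  simp [transfer, Finset.sum_apply, Pi.single_apply, sum_sub_distrib, sum_boole, eq_comm]

theorem transfer_product_apply (A B : Finset ι) (k : ι) :
    transfer (A ×ˢ B) k = (if k ∈ A then #B else 0 : ℝ) - if k ∈ B then #A else 0 := by
  rw [transfer_apply, filter_product_left (· = k), filter_product_right (· = k), filter_eq',
    filter_eq']
  split_ifs <;> simp

end Transfer

section Centered

variable [Fintype ι]

noncomputable def centered (a : ι → ℝ) : ι → ℝ := fun i => a i - (Fintype.card ι : ℝ)⁻¹ * ∑ j, a j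

theorem centered_apply_sub_centered_apply (a : ι → ℝ) (i j : ι) :
    centered a j - centered a i = a j - a i := by
  simp only [centered]; ring

theorem centered_smul (c : ℝ) (a : ι → ℝ) : centered (c • a) = c • centered a := by
  ext i; simp only [centered, Pi.smul_apply, smul_eq_mul, ← mul_sum]; ring

theorem centered_neg (a : ι → ℝ) : centered (-a) = -centered a := by
  simpa using centered_smul (-1) a

theorem centered_add_const (a : ι → ℝ) (b : ℝ) : centered (fun i => a i + b) = centered a := by
  ext k
  have hn : (Fintype.card ι : ℝ) ≠ 0 := Nat.cast_ne_zero.2 (Fintype.card_pos_iff.2 ⟨k⟩).ne'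
  simp only [centered, sum_add_distrib, sum_const, card_univ, nsmul_eq_mul]
  field_simp
  ring

theorem centered_sub_indicator [DecidableEq ι] (B : Finset ι) (t : ℝ) (z : ι → ℝ) :
    centered (fun i => z i - if i ∈ B then t else 0) =
      centered z + (t / Fintype.card ι) • transfer (Bᶜ ×ˢ B) := by
  ext k
  have hn : (Fintype.card ι : ℝ) ≠ 0 := Nat.cast_ne_zero.2 (Fintype.card_pos_iff.2 ⟨k⟩).ne'
  have hB : (#Bᶜ : ℝ) = Fintype.card ι - #B := by
    rw [← card_add_card_compl B]; push_cast; ring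
  simp only [centered, Pi.add_apply, Pi.smul_apply, smul_eq_mul, transfer_product_apply,
    sum_sub_distrib, sum_ite_mem, univ_inter, sum_const, nsmul_eq_mul, mem_compl]
  split_ifs <;> push_cast [hB] <;> field_simp <;> ring

end Centered

noncomputable def extendLinearAbove (ψ : ℝ → ℝ) (K c : ℝ) (v : ℝ) : ℝ :=
  ψ (min v c) + K * max (v - c) 0

theorem extendLinearAbove_of_le {ψ : ℝ → ℝ} {K c v : ℝ} (hv : v ≤ c) :
    extendLinearAbove ψ K c v = ψ v := by
  simp [extendLinearAbove, hv]

theorem extendLinearAbove_of_ge {ψ : ℝ → ℝ} {K c v : ℝ} (hv : c ≤ v) :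
    extendLinearAbove ψ K c v = ψ c + K * (v - c) := by
  simp [extendLinearAbove, hv]

namespace Seminorm

theorem apply_smul_add_smul_comp_perm_le (p : Seminorm ℝ (ι → ℝ))
    (hp : ∀ (σ : Equiv.Perm ι) a, p (a ∘ σ) = p a) (z : ι → ℝ) (σ : Equiv.Perm ι) {l : ℝ}
    (hl₀ : 0 ≤ l) (hl₁ : l ≤ 1) :
    p ((1 - l) • z + l • (z ∘ σ)) ≤ p z :=
  calc p ((1 - l) • z + l • (z ∘ σ)) ≤ (1 - l) * p z + l * p (z ∘ σ) := by
        grw [map_add_le_add, map_smul_eq_mul, map_smul_eq_mul, Real.norm_of_nonneg hl₀,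
          Real.norm_of_nonneg (sub_nonneg.2 hl₁)]
    _ = p z := by rw [hp]; ring

variable [DecidableEq ι] (p : Seminorm ℝ (ι → ℝ))

theorem apply_add_smul_single_sub_single_le (hp : ∀ (σ : Equiv.Perm ι) a, p (a ∘ σ) = p a)
    (z : ι → ℝ) {i j : ι} {s : ℝ} (hs₀ : 0 ≤ s) (hs : s ≤ z j - z i) :
    p (z + s • (Pi.single i 1 - Pi.single j 1)) ≤ p z := by
  obtain hd | hd := (hs₀.trans hs).eq_or_lt
  · obtain rfl : s = 0 := by linarith
    simp
  have hij : i ≠ j := by rintro rfl; simp at hd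
  convert p.apply_smul_add_smul_comp_perm_le hp z (Equiv.swap i j) (by positivity)
    ((div_le_one hd).2 hs) using 2
  ext k
  simp only [Pi.add_apply, Pi.sub_apply, Pi.smul_apply, smul_eq_mul, Pi.single_apply,
    Function.comp_apply, Equiv.swap_apply_def]
  split_ifs <;> subst_vars <;> first | exact absurd rfl hij | field_simp; ring

theorem apply_add_smul_transfer_le (hp : ∀ (σ : Equiv.Perm ι) a, p (a ∘ σ) = p a)
    {s : ℝ} (hs : 0 ≤ s) (S : Finset (ι × ι)) (z : ι → ℝ)
    (hz : ∀ q ∈ S, s * (#{r ∈ S | r.1 = q.1} + #{r ∈ S | r.2 = q.2}) ≤ z q.2 - z q.1) :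
    p (z + s • transfer S) ≤ p z := by
  induction S using Finset.induction_on with
  | empty => simp [transfer]
  | @insert q S hq ih =>
    -- the transfers along `S` raised `z q.1` by at most `s * #out` and lowered `z q.2` by at
    -- most `s * #in`
    have hgap : s ≤ (z + s • transfer S) q.2 - (z + s • transfer S) q.1 := by
      have hzq := hz q (mem_insert_self q S)
      simp only [card_filter_insert hq, if_true] at hzq
      simp only [Pi.add_apply, Pi.smul_apply, smul_eq_mul, transfer_apply]
      push_cast at hzq
      nlinarith
    calc p (z + s • transfer (insert q S))
        = p ((z + s • transfer S) + s • (Pi.single q.1 1 - Pi.single q.2 1)) := by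
          rw [transfer, sum_insert hq, ← transfer, smul_add, add_comm (s • _), add_assoc]
      _ ≤ p (z + s • transfer S) := p.apply_add_smul_single_sub_single_le hp _ hs hgap
      _ ≤ p z := ih fun r hr => le_trans (by gcongr <;> exact subset_insert q S)
          (hz r (mem_insert_of_mem hr))

variable [Fintype ι]

theorem apply_centered_sub_indicator_le (hp : ∀ (σ : Equiv.Perm ι) a, p (a ∘ σ) = p a)
    (B : Finset ι) {t : ℝ} (ht : 0 ≤ t) (z : ι → ℝ) (hz : ∀ i ∉ B, ∀ j ∈ B, t ≤ z j - z i) :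
    p (centered (fun i => z i - if i ∈ B then t else 0)) ≤ p (centered z) := by
  rw [centered_sub_indicator]
  refine p.apply_add_smul_transfer_le hp (by positivity) _ _ fun q hq => ?_
  obtain ⟨hq₁, hq₂⟩ := mem_product.1 hq
  have hn : (Fintype.card ι : ℝ) ≠ 0 := Nat.cast_ne_zero.2 (Fintype.card_pos_iff.2 ⟨q.1⟩).ne'
  rw [filter_product_left (· = q.1), filter_product_right (· = q.2), filter_eq', filter_eq',
    if_pos hq₁, if_pos hq₂, card_product, card_product, card_singleton, card_singleton, one_mul,
    mul_one, ← Nat.cast_add, card_add_card_compl, centered_apply_sub_centered_apply,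
    div_mul_cancel₀ _ hn]
  exact hz q.1 (mem_compl.1 hq₁) q.2 hq₂

theorem apply_centered_extendLinearAbove_comp_le (hp : ∀ (σ : Equiv.Perm ι) a, p (a ∘ σ) = p a)
    {ψ : ℝ → ℝ} {K : NNReal} (hψ : Monotone ψ) (hψK : LipschitzWith K ψ) (f : ι → ℝ)
    {c c' : ℝ} (hcc : c ≤ c') (hf : ∀ i, f i ≤ c ∨ c' ≤ f i) :
    p (centered (extendLinearAbove ψ K c' ∘ f)) ≤ p (centered (extendLinearAbove ψ K c ∘ f)) := by
  have hlip := hψK.le_add_mul c' c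
  rw [Real.dist_eq, abs_of_nonneg (sub_nonneg.2 hcc)] at hlip
  set t := K * (c' - c) - (ψ c' - ψ c)
  set B : Finset ι := {i | c' ≤ f i}
  have hsplice : extendLinearAbove ψ K c' ∘ f =
      fun i => (extendLinearAbove ψ K c ∘ f) i - if i ∈ B then t else 0 := by
    ext i
    by_cases hi : c' ≤ f i
    · simp only [Function.comp_apply, B, mem_filter, mem_univ, true_and, if_pos hi,
        extendLinearAbove_of_ge hi, extendLinearAbove_of_ge (hcc.trans hi), t]
      ring
    · have hi' := (hf i).resolve_right hi
      simp [B, hi, extendLinearAbove_of_le hi', extendLinearAbove_of_le (hi'.trans hcc)]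
  rw [hsplice]
  refine p.apply_centered_sub_indicator_le hp B (by linarith) _ fun i hi j hj => ?_
  simp only [B, mem_filter, mem_univ, true_and] at hi hj
  have hi' := (hf i).resolve_right hi
  simp only [Function.comp_apply, extendLinearAbove_of_le hi',
    extendLinearAbove_of_ge (hcc.trans hj)]
  nlinarith [hψ hi', hψ hcc, K.coe_nonneg]

theorem antitone_apply_centered_extendLinearAbove_comp
    (hp : ∀ (σ : Equiv.Perm ι) a, p (a ∘ σ) = p a)
    {ψ : ℝ → ℝ} {K : NNReal} (hψ : Monotone ψ) (hψK : LipschitzWith K ψ) (f : ι → ℝ) :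
    Antitone fun c => p (centered (extendLinearAbove ψ K c ∘ f)) := by
  suffices ∀ (S : Finset ι) (c c' : ℝ), c ≤ c' → (∀ i, c < f i → f i < c' → i ∈ S) →
      p (centered (extendLinearAbove ψ K c' ∘ f)) ≤ p (centered (extendLinearAbove ψ K c ∘ f))
    from fun c c' hcc => this univ c c' hcc fun i _ _ => mem_univ i
  intro S
  induction S using Finset.induction_on with
  | empty =>
    intro c c' hcc hS
    refine p.apply_centered_extendLinearAbove_comp_le hp hψ hψK f hcc fun i => ?_
    by_contra! hi
    exact notMem_empty i (hS i hi.1 hi.2)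
  | @insert a S _ ih =>
    intro c c' hcc hS
    have hS' : ∀ {d d'}, c ≤ d → d' ≤ c' → f a ∉ Set.Ioo d d' →
        ∀ i, d < f i → f i < d' → i ∈ S := fun hd hd' ha i hi hi' =>
      (mem_insert.1 (hS i (hd.trans_lt hi) (hi'.trans_le hd'))).resolve_left
        (by rintro rfl; exact ha ⟨hi, hi'⟩)
    by_cases ha : f a ∈ Set.Ioo c c'
    · exact (ih _ _ ha.2.le (hS' ha.1.le le_rfl (by simp))).trans
        (ih _ _ ha.1.le (hS' le_rfl ha.2.le (by simp)))
    · exact ih c c' hcc (hS' le_rfl le_rfl ha)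

theorem apply_centered_comp_le_of_monotone (hp : ∀ (σ : Equiv.Perm ι) a, p (a ∘ σ) = p a)
    {ψ : ℝ → ℝ} {K : NNReal} (hψ : Monotone ψ) (hψK : LipschitzWith K ψ) (f : ι → ℝ) :
    p (centered (ψ ∘ f)) ≤ K * p (centered f) := by
  set M := ∑ i, |f i|
  have hM : ∀ i, |f i| ≤ M := fun i => single_le_sum (fun j _ => abs_nonneg (f j)) (mem_univ i)
  have hlow : extendLinearAbove ψ K (-M) ∘ f = fun i => ((K : ℝ) • f) i + (ψ (-M) + K * M) := by
    ext i
    rw [Function.comp_apply, extendLinearAbove_of_ge (neg_le_of_abs_le (hM i))]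
    simp only [Pi.smul_apply, smul_eq_mul]
    ring
  have hhigh : extendLinearAbove ψ K M ∘ f = ψ ∘ f :=
    funext fun i => extendLinearAbove_of_le (le_of_abs_le (hM i))
  calc p (centered (ψ ∘ f)) = p (centered (extendLinearAbove ψ K M ∘ f)) := by rw [hhigh]
    _ ≤ p (centered (extendLinearAbove ψ K (-M) ∘ f)) :=
      p.antitone_apply_centered_extendLinearAbove_comp hp hψ hψK f
        (neg_le_self (sum_nonneg fun i _ => abs_nonneg (f i)))
    _ = K * p (centered f) := by
      rw [hlow, centered_add_const, centered_smul, map_smul_eq_mul,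
        Real.norm_of_nonneg K.coe_nonneg]

theorem apply_centered_comp_le (hp : ∀ (σ : Equiv.Perm ι) a, p (a ∘ σ) = p a)
    {ψ : ℝ → ℝ} {K : NNReal} (hψ : Monotone ψ ∨ Antitone ψ) (hψK : LipschitzWith K ψ)
    (f : ι → ℝ) :
    p (centered (ψ ∘ f)) ≤ K * p (centered f) := by
  rcases hψ with hψ | hψ
  · exact p.apply_centered_comp_le_of_monotone hp hψ hψK f
  · have := p.apply_centered_comp_le_of_monotone hp (ψ := -ψ) hψ.neg hψK.neg f
    rwa [Pi.neg_comp, centered_neg, map_neg_eq_map] at this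

end Seminorm

theorem chain_rule_symmetric_norm_general {n : ℕ} (φ : ℝ → ℝ) (K : NNReal)
    (hφ_mono : Monotone φ ∨ Antitone φ) (hφ_lip : LipschitzWith K φ)
    (N : (Fin n → ℝ) → ℝ)
    (hN_add : ∀ a b, N (a + b) ≤ N a + N b)
    (hN_smul : ∀ (c : ℝ) a, N (c • a) = |c| * N a)
    (hN_perm : ∀ (σ : Equiv.Perm (Fin n)) a, N (a ∘ σ) = N a)
    (f : Fin n → ℝ) :
    N (fun i => φ (f i) - (n : ℝ)⁻¹ * ∑ j, φ (f j)) ≤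
      K * N (fun i => f i - (n : ℝ)⁻¹ * ∑ j, f j) := by
  let p : Seminorm ℝ (Fin n → ℝ) := .of N hN_add fun c a => by rw [hN_smul, Real.norm_eq_abs]
  have := p.apply_centered_comp_le hN_perm hφ_mono hφ_lip f
  unfold centered at this
  rwa [Fintype.card_fin] at this

/-- Corollary 2: for a monotone Lipschitz function `φ` and any symmetric norm
`N` on `ℝⁿ`, `‖φ(f) − (Eφ(f))𝟙‖ ≤ Lip(φ)·‖f − (Ef)𝟙‖`. -/
theorem chain_rule_symmetric_norm {n : ℕ} (φ : ℝ → ℝ) (K : NNReal)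
    (hφ_mono : Monotone φ ∨ Antitone φ) (hφ_lip : LipschitzWith K φ)
    (N : (Fin n → ℝ) → ℝ)
    (hN_add : ∀ a b, N (a + b) ≤ N a + N b)
    (hN_smul : ∀ (c : ℝ) a, N (c • a) = |c| * N a)
    (hN_def : ∀ a, N a = 0 → a = 0)
    (hN_perm : ∀ (σ : Equiv.Perm (Fin n)) a, N (a ∘ σ) = N a)
    (hN_sign : ∀ (ε a : Fin n → ℝ), (∀ i, ε i = 1 ∨ ε i = -1) →
      N (fun i => ε i * a i) = N a)
    (f : Fin n → ℝ) :
    N (fun i => φ (f i) - (n : ℝ)⁻¹ * ∑ j, φ (f j)) ≤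
      K * N (fun i => f i - (n : ℝ)⁻¹ * ∑ j, f j) :=
  chain_rule_symmetric_norm_general φ K hφ_mono hφ_lip N hN_add hN_smul hN_perm f
end

section
/- Let (Ω, F, μ) be a probability space, 1 ≤ p ≤ ∞, φ : ℝ → ℝ a monotone Lipschitz function, and f ∈ L^∞(Ω, μ) real-valued. Then ‖φ∘f − E(φ∘f)‖_p ≤ Lip(φ)·‖f − E f‖_p. -/
/-!
Assume `φ` nondecreasing (otherwise replace it by `-φ`) and put `g = φ∘f - E(φ∘f)` and
`h = K (f - E f)`. Both `g` and `h - g = (K x - φ x)∘f - const` are nondecreasing functions of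
`f`, so for a convex `Φ` with right derivative `Φ'` the functions `Φ'∘g` and `h - g` vary
together, and Chebyshev's inequality gives `E[Φ'(g) (h - g)] ≥ E[Φ'(g)] E[h - g] = 0`. Adding
this to the tangent line inequality `Φ(h) ≥ Φ(g) + Φ'(g) (h - g)` gives `E Φ(g) ≤ E Φ(h)`: `g`
is dominated by `h` in the convex order. Taking `Φ = |·|^p`, and `Φ = (|·| - ‖h‖_∞)⁺` for
`p = ∞`, yields `‖g‖_p ≤ ‖h‖_p = K ‖f - E f‖_p`.
-/

open MeasureTheory Set Bornology
open scoped ENNReal NNReal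

lemma ConvexOn.add_rightDeriv_mul_sub_le {S : Set ℝ} {Φ : ℝ → ℝ} (hΦ : ConvexOn ℝ S Φ)
    {x y : ℝ} (hx : x ∈ interior S) (hy : y ∈ S) :
    Φ x + derivWithin Φ (Ioi x) x * (y - x) ≤ Φ y := by
  rcases lt_trichotomy x y with hxy | rfl | hyx
  · have := hΦ.rightDeriv_le_slope_of_mem_interior hx hy hxy
    rw [slope_def_field, le_div_iff₀ (sub_pos.2 hxy)] at this
    linarith
  · simp
  · have := (hΦ.slope_le_leftDeriv_of_mem_interior hy hx hyx).trans
      (hΦ.leftDeriv_le_rightDeriv_of_mem_interior hx)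
    rw [slope_def_field, div_le_iff₀ (sub_pos.2 hyx)] at this
    linarith

lemma LipschitzWith.monotone_const_mul_sub {K : ℝ≥0} {φ : ℝ → ℝ} (hφ : LipschitzWith K φ) :
    Monotone fun x => (K : ℝ) * x - φ x := by
  intro x y hxy
  have := hφ.dist_le_mul y x
  rw [Real.dist_eq, Real.dist_eq, abs_of_nonneg (sub_nonneg.2 hxy)] at this
  linarith [le_abs_self (φ y - φ x)]

lemma convexOn_univ_norm_rpow {E : Type*} [SeminormedAddCommGroup E] [NormedSpace ℝ E]
    {q : ℝ} (hq : 1 ≤ q) : ConvexOn ℝ univ fun x : E => ‖x‖ ^ q := by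
  refine ⟨convex_univ, fun x _ y _ a b ha hb hab => ?_⟩
  calc ‖a • x + b • y‖ ^ q ≤ (a • ‖x‖ + b • ‖y‖) ^ q := by
        gcongr
        exact convexOn_univ_norm.2 (mem_univ x) (mem_univ y) ha hb hab
    _ ≤ a • ‖x‖ ^ q + b • ‖y‖ ^ q :=
        (convexOn_rpow hq).2 (norm_nonneg x) (norm_nonneg y) ha hb hab

section

variable {Ω : Type*} [MeasurableSpace Ω] {μ : Measure Ω}

lemma MeasureTheory.MemLp.comp_of_isBounded_image_Icc {g : Ω → ℝ} (hg : MemLp g ⊤ μ) {Φ : ℝ → ℝ}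
    (hΦm : Measurable Φ) (hΦb : ∀ a b, IsBounded (Φ '' Icc a b)) :
    MemLp (fun ω => Φ (g ω)) ⊤ μ := by
  obtain ⟨M, hM⟩ := isBounded_iff_forall_norm_le.1 (hΦb (-lpNorm g ⊤ μ) (lpNorm g ⊤ μ))
  refine memLp_top_of_bound (hΦm.comp_aemeasurable hg.1.aemeasurable).aestronglyMeasurable M ?_
  filter_upwards [ae_le_lpNorm_exponent_top hg] with ω hω
  exact hM _ (mem_image_of_mem _ (abs_le.1 hω))

lemma Continuous.comp_memLp_top {Φ : ℝ → ℝ} (hΦ : Continuous Φ) {g : Ω → ℝ}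
    (hg : MemLp g ⊤ μ) : MemLp (fun ω => Φ (g ω)) ⊤ μ :=
  hg.comp_of_isBounded_image_Icc hΦ.measurable fun _ _ => (isCompact_Icc.image hΦ).isBounded

lemma Monotone.comp_memLp_top {Φ : ℝ → ℝ} (hΦ : Monotone Φ) {g : Ω → ℝ}
    (hg : MemLp g ⊤ μ) : MemLp (fun ω => Φ (g ω)) ⊤ μ :=
  hg.comp_of_isBounded_image_Icc hΦ.measurable fun a b =>
    (Metric.isBounded_Icc (Φ a) (Φ b)).subset hΦ.image_Icc_subset

lemma ConvexOn.comp_memLp_top {Φ : ℝ → ℝ} (hΦ : ConvexOn ℝ univ Φ) {g : Ω → ℝ}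
    (hg : MemLp g ⊤ μ) : MemLp (fun ω => Φ (g ω)) ⊤ μ :=
  (continuousOn_univ.1 (hΦ.continuousOn isOpen_univ)).comp_memLp_top hg

theorem integral_mul_integral_le_integral_mul_of_monovary [IsProbabilityMeasure μ]
    {F G : Ω → ℝ} (hF : Integrable F μ) (hG : Integrable G μ)
    (hFG : Integrable (fun ω => F ω * G ω) μ) (hmono : Monovary F G) :
    (∫ ω, F ω ∂μ) * ∫ ω, G ω ∂μ ≤ ∫ ω, F ω * G ω ∂μ := by
  have inner : ∀ x, ∫ y, (F y - F x) * (G y - G x) ∂μ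
      = ∫ ω, F ω * G ω ∂μ - G x * ∫ ω, F ω ∂μ - F x * ∫ ω, G ω ∂μ + F x * G x := by
    intro x
    have : ∀ y, (F y - F x) * (G y - G x) = F y * G y - G x * F y - F x * G y + F x * G x :=
      fun y => by ring
    simp only [this]
    rw [integral_add (by fun_prop) (by fun_prop), integral_sub (by fun_prop) (by fun_prop),
      integral_sub hFG (by fun_prop), integral_const_mul, integral_const_mul, integral_const,
      probReal_univ, one_smul]
  have hpos : 0 ≤ ∫ x, ∫ y, (F y - F x) * (G y - G x) ∂μ ∂μ :=
    integral_nonneg fun x => integral_nonneg fun y => hmono.sub_mul_sub_nonneg x y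
  rw [integral_congr_ae (ae_of_all _ inner), integral_add (by fun_prop) hFG,
    integral_sub (by fun_prop) (by fun_prop), integral_sub (by fun_prop) (by fun_prop),
    integral_mul_const, integral_mul_const, integral_const, probReal_univ, one_smul] at hpos
  linarith

variable (μ) in
/-- The integrals are junk (`0`) unless `Φ ∘ g` and `Φ ∘ h` are integrable, which is automatic
for essentially bounded `g` and `h`. -/
def ConvexOrderLE (g h : Ω → ℝ) : Prop :=
  ∀ Φ : ℝ → ℝ, ConvexOn ℝ univ Φ → ∫ ω, Φ (g ω) ∂μ ≤ ∫ ω, Φ (h ω) ∂μ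

theorem convexOrderLE_of_monovary [IsProbabilityMeasure μ] {g h : Ω → ℝ}
    (hg : MemLp g ⊤ μ) (hh : MemLp h ⊤ μ) (hmean : ∫ ω, g ω ∂μ = ∫ ω, h ω ∂μ)
    (hmono : Monovary (fun ω => h ω - g ω) g) : ConvexOrderLE μ g h := by
  intro Φ hΦ
  set Φ' := fun x => derivWithin Φ (Ioi x) x
  have hΦ'_mono : Monotone Φ' := by simpa using hΦ.monotoneOn_rightDeriv
  have hu := hΦ'_mono.comp_memLp_top hg
  have hv : MemLp (fun ω => h ω - g ω) ⊤ μ := hh.sub hg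
  have huv : Integrable (fun ω => Φ' (g ω) * (h ω - g ω)) μ :=
    (hv.mul' hu (r := ⊤)).integrable le_top
  have hcheb := integral_mul_integral_le_integral_mul_of_monovary (hu.integrable le_top)
    (hv.integrable le_top) huv (hmono.symm.comp_monotone_left hΦ'_mono)
  have hv0 : ∫ ω, (h ω - g ω) ∂μ = 0 := by
    rw [integral_sub (hh.integrable le_top) (hg.integrable le_top), hmean, sub_self]
  have htangent : ∫ ω, (Φ (g ω) + Φ' (g ω) * (h ω - g ω)) ∂μ ≤ ∫ ω, Φ (h ω) ∂μ :=
    integral_mono ((hΦ.comp_memLp_top hg).integrable le_top |>.add huv)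
      ((hΦ.comp_memLp_top hh).integrable le_top)
      fun ω => hΦ.add_rightDeriv_mul_sub_le (by simp) (mem_univ _)
  rw [integral_add ((hΦ.comp_memLp_top hg).integrable le_top) huv] at htangent
  rw [hv0, mul_zero] at hcheb
  linarith

theorem ConvexOrderLE.eLpNorm_top_le [IsFiniteMeasure μ] {g h : Ω → ℝ}
    (hcx : ConvexOrderLE μ g h) (hg : MemLp g ⊤ μ) (hh : MemLp h ⊤ μ) :
    eLpNorm g ⊤ μ ≤ eLpNorm h ⊤ μ := by
  set T := lpNorm h ⊤ μ
  set Φ : ℝ → ℝ := fun x => max (‖x‖ - T) 0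
  have hΦ : ConvexOn ℝ univ Φ :=
    (convexOn_univ_norm.add_const (-T)).sup (convexOn_const 0 convex_univ)
  have hΦh : ∫ ω, Φ (h ω) ∂μ = 0 := by
    refine integral_eq_zero_of_ae ?_
    filter_upwards [ae_le_lpNorm_exponent_top hh] with ω hω
    simpa [Φ] using hω
  have hΦg : (fun ω => Φ (g ω)) =ᵐ[μ] 0 :=
    (integral_eq_zero_iff_of_nonneg (fun ω => le_max_right _ _)
      ((hΦ.comp_memLp_top hg).integrable le_top)).1
      ((hΦh ▸ hcx Φ hΦ).antisymm (integral_nonneg fun ω => le_max_right _ _))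
  calc eLpNorm g ⊤ μ ≤ ENNReal.ofReal T := by
        refine eLpNormEssSup_le_of_ae_bound ?_
        filter_upwards [hΦg] with ω hω
        simpa [Φ] using hω
    _ = eLpNorm h ⊤ μ := ofReal_lpNorm hh

theorem ConvexOrderLE.eLpNorm_le [IsFiniteMeasure μ] {g h : Ω → ℝ}
    (hcx : ConvexOrderLE μ g h) (hg : MemLp g ⊤ μ) (hh : MemLp h ⊤ μ)
    {p : ℝ≥0∞} (hp : 1 ≤ p) : eLpNorm g p μ ≤ eLpNorm h p μ := by
  rcases eq_or_ne p ⊤ with rfl | hp_top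
  · exact hcx.eLpNorm_top_le hg hh
  have hp0 : p ≠ 0 := (zero_lt_one.trans_le hp).ne'
  have hq : 1 ≤ p.toReal := by simpa using ENNReal.toReal_mono hp_top hp
  rw [(hg.mono_exponent le_top).eLpNorm_eq_integral_rpow_norm hp0 hp_top,
    (hh.mono_exponent le_top).eLpNorm_eq_integral_rpow_norm hp0 hp_top]
  exact ENNReal.ofReal_le_ofReal <| Real.rpow_le_rpow (integral_nonneg fun ω => by positivity)
    (hcx _ (convexOn_univ_norm_rpow hq)) (by positivity)

theorem eLpNorm_comp_sub_integral_le_of_monotone [IsProbabilityMeasure μ] {φ : ℝ → ℝ} {K : ℝ≥0}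
    (hφ : Monotone φ) (hlip : LipschitzWith K φ) {f : Ω → ℝ} (hf : MemLp f ⊤ μ) {p : ℝ≥0∞}
    (hp : 1 ≤ p) :
    eLpNorm (fun ω => φ (f ω) - ∫ ω, φ (f ω) ∂μ) p μ ≤
      K * eLpNorm (fun ω => f ω - ∫ ω, f ω ∂μ) p μ := by
  set m := ∫ ω, f ω ∂μ
  set c := ∫ ω, φ (f ω) ∂μ
  have hφf : MemLp (fun ω => φ (f ω)) ⊤ μ := hlip.continuous.comp_memLp_top hf
  have hg : MemLp (fun ω => φ (f ω) - c) ⊤ μ := hφf.sub (memLp_const c)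
  have hh : MemLp (fun ω => (K : ℝ) * (f ω - m)) ⊤ μ := (hf.sub (memLp_const m)).const_mul _
  have hmean : ∫ ω, (φ (f ω) - c) ∂μ = ∫ ω, (K : ℝ) * (f ω - m) ∂μ := by
    rw [integral_sub (hφf.integrable le_top) (integrable_const c), integral_const_mul,
      integral_sub (hf.integrable le_top) (integrable_const m)]
    simp [m, c]
  have hmono : Monovary (fun ω => (K : ℝ) * (f ω - m) - (φ (f ω) - c)) fun ω => φ (f ω) - c := by
    intro i j hij
    have := hlip.monotone_const_mul_sub.monovary hφ (show φ (f i) < φ (f j) by linarith)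
    dsimp only at this ⊢
    linarith
  calc _ ≤ eLpNorm (fun ω => (K : ℝ) * (f ω - m)) p μ :=
        (convexOrderLE_of_monovary hg hh hmean hmono).eLpNorm_le hg hh hp
    _ = K * eLpNorm (fun ω => f ω - m) p μ :=
        (eLpNorm_const_smul (K : ℝ) (fun ω => f ω - m) p μ).trans (by rw [NNReal.enorm_eq])

end

/-- Theorem 3: for a monotone Lipschitz `φ` and real `f ∈ L^∞(Ω,μ)` over a
probability space, `‖φ∘f − E(φ∘f)‖_p ≤ Lip(φ)·‖f − Ef‖_p`. -/
theorem chain_rule_random_variables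
    {Ω : Type*} [MeasurableSpace Ω] (μ : Measure Ω) [IsProbabilityMeasure μ]
    (p : ℝ≥0∞) (hp : 1 ≤ p)
    (φ : ℝ → ℝ) (K : NNReal)
    (hφ_mono : Monotone φ ∨ Antitone φ) (hφ_lip : LipschitzWith K φ)
    (f : Ω → ℝ) (hf : MemLp f ⊤ μ) :
    eLpNorm (fun ω => φ (f ω) - ∫ ω, φ (f ω) ∂μ) p μ ≤
      (K : ℝ≥0∞) * eLpNorm (fun ω => f ω - ∫ ω, f ω ∂μ) p μ := by
  rcases hφ_mono with hmono | hanti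
  · exact eLpNorm_comp_sub_integral_le_of_monotone hmono hφ_lip hf hp
  · have := eLpNorm_comp_sub_integral_le_of_monotone hanti.neg hφ_lip.neg hf hp
    refine (eLpNorm_congr_norm_ae (ae_of_all _ fun ω => ?_)).trans_le this
    simp only [integral_neg, neg_sub_neg]
    exact norm_sub_rev _ _
end
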